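/- arXiv:1911.10116 — 5 statements merged into one kernel-verified Lean document; each statement's English description precedes it below -/
import Mathlib

section
/- For every network, the equilibrium weight recursion is well defined and every agent's behavior has a signal-counting interpretation: for every agent i ≥ 1, the equilibrium weight vector W_i satisfies Σ_j W_i(j) = Σ_j (W_i(j))², and the number r_i := Σ_j W_i(j) of signals aggregated by agent i satisfies 1 ≤ r_i ≤ i. (Equivalently, agent i's equilibrium log-action ℓ_i = Σ_j W_i(j)λ_j has conditional distribution N(r_i·2/σ², r_i·4/σ²) given ω = 1 and N(−r_i·2/σ², r_i·4/σ²) given ω = 0.) -/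
/-!
Agent `i`'s weight vector is `W_i = e_i + p`, where `p = βŴ` is the orthogonal projection of
`𝟙 ∈ ℝ^{i-1}` onto the row space of `Ŵ`; the rows of `Ŵ` are independent because each
`W_j` is unitriangular (`W_j(j) = 1`, `W_j(m) = 0` for `m > j`). For a projection,
`Σ p = ⟨p, 𝟙⟩ = ⟨p, p⟩ = Σ p²`, which is the first identity, and Cauchy–Schwarz
`⟨p, 𝟙⟩² ≤ (i - 1) ⟨p, p⟩` then gives `0 ≤ Σ p ≤ i - 1`, i.e. `1 ≤ r_i ≤ i`.
-/

open Matrix Finset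

/-- The equilibrium weight vectors of the sequential social-learning model:
`W_i = e_i` if `N(i) = ∅`, and otherwise `W_i = e_i + Σ_k β_{i,k} W_{j(k)}` where
`β_i = 𝟙ᵀ Ŵᵀ (ŴŴᵀ)⁻¹` and `Ŵ` is the matrix of neighbors' weight vectors restricted
to coordinates `1,…,i−1`. -/
noncomputable def eqW (Net : ℕ → Finset ℕ) (i : ℕ) : ℕ → ℝ :=
  Nat.strongRecOn i (fun n prev =>
    let nb := (Net n).filter (fun j => j < n)
    if nb.Nonempty then
      let What : Matrix {j // j ∈ nb} (Fin (n - 1)) ℝ :=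
        Matrix.of (fun j m => prev j.1 (Finset.mem_filter.mp j.2).2 (m.1 + 1))
      let beta : {j // j ∈ nb} → ℝ :=
        Matrix.vecMul (fun j => ∑ m, What j m) ((What * What.transpose)⁻¹)
      fun m => (if m = n then (1 : ℝ) else 0) +
        ∑ j : {j // j ∈ nb}, beta j * prev j.1 (Finset.mem_filter.mp j.2).2 m
    else fun m => if m = n then (1 : ℝ) else 0)

/-- The number of signals aggregated by agent `i`: `r_i = Σ_j W_i(j)`. -/
noncomputable def rcount (Net : ℕ → Finset ℕ) (i : ℕ) : ℝ :=
  ∑ j ∈ Finset.range (i + 1), eqW Net i j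

section LinearAlgebra

variable {ι κ R : Type*} [Fintype ι]

theorem Matrix.eq_zero_of_vecMul_eq_zero_of_echelon [LinearOrder ι] [Semiring R]
    [NoZeroDivisors R] (V : Matrix ι κ R) (c : ι → κ) (hpivot : ∀ j, V j (c j) ≠ 0)
    (hbelow : ∀ j j', j' < j → V j' (c j) = 0) {v : ι → R} (hv : v ᵥ* V = 0) : v = 0 := by
  classical
  by_contra hne
  obtain ⟨j₀, hj₀⟩ := Function.ne_iff.mp hne
  set S := univ.filter (fun j => v j ≠ 0)
  have hS : S.Nonempty := ⟨j₀, by simpa [S] using hj₀⟩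
  set j := S.max' hS
  have hj : v j ≠ 0 := (mem_filter.mp (S.max'_mem hS)).2
  have hpivot_entry : (v ᵥ* V) (c j) = v j * V j (c j) := by
    refine sum_eq_single j (fun j' _ hj' => ?_) (by simp)
    by_cases hvj' : v j' = 0
    · rw [hvj', zero_mul]
    · have hle : j' ≤ j := S.le_max' j' (by simpa [S] using hvj')
      exact mul_eq_zero_of_right _ (hbelow j j' (lt_of_le_of_ne hle hj'))
  exact mul_ne_zero hj (hpivot j) (by rw [← hpivot_entry, hv, Pi.zero_apply])

theorem Matrix.isUnit_det_mul_transpose_self [Fintype κ] [DecidableEq ι] [Field R]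
    [LinearOrder R] [IsStrictOrderedRing R] (V : Matrix ι κ R)
    (hV : ∀ v : ι → R, v ᵥ* V = 0 → v = 0) :
    IsUnit (V * Vᵀ).det := by
  rw [isUnit_iff_ne_zero, ne_eq, ← exists_vecMul_eq_zero_iff]
  rintro ⟨v, hv0, hv⟩
  refine hv0 (hV v (dotProduct_self_eq_zero.mp ?_))
  calc (v ᵥ* V) ⬝ᵥ (v ᵥ* V) = (v ᵥ* (V * Vᵀ)) ⬝ᵥ v := by
        rw [← vecMul_vecMul, vecMul_transpose, ← dotProduct_mulVec, dotProduct_comm]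
    _ = 0 := by rw [hv, zero_dotProduct]

/-- The orthogonal projection of `u` onto the row space of `V`, provided `V Vᵀ` is
invertible. -/
noncomputable def Matrix.rowProj [Fintype κ] [DecidableEq ι] [CommRing R] (V : Matrix ι κ R)
    (u : κ → R) : κ → R :=
  ((V *ᵥ u) ᵥ* (V * Vᵀ)⁻¹) ᵥ* V

theorem Matrix.rowProj_dotProduct_self [Fintype κ] [DecidableEq ι] [CommRing R]
    (V : Matrix ι κ R) (hV : IsUnit (V * Vᵀ).det) (u : κ → R) :
    V.rowProj u ⬝ᵥ V.rowProj u = V.rowProj u ⬝ᵥ u := by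
  have hVp : V *ᵥ V.rowProj u = V *ᵥ u := by
    rw [rowProj, ← mulVec_transpose, mulVec_mulVec, ← mulVec_transpose, transpose_nonsing_inv,
      transpose_mul, transpose_transpose, mulVec_mulVec, mul_nonsing_inv _ hV, one_mulVec]
  conv_lhs => enter [1]; rw [rowProj]
  rw [← dotProduct_mulVec, hVp, dotProduct_mulVec, ← rowProj]

end LinearAlgebra

theorem Finset.sum_nonneg_and_le_card_of_sum_eq_sum_sq {ι α : Type*} [Field α] [LinearOrder α]
    [IsStrictOrderedRing α] (s : Finset ι) (f : ι → α)
    (h : ∑ i ∈ s, f i = ∑ i ∈ s, f i ^ 2) :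
    0 ≤ ∑ i ∈ s, f i ∧ ∑ i ∈ s, f i ≤ #s := by
  have hnonneg : 0 ≤ ∑ i ∈ s, f i := h ▸ sum_nonneg fun i _ => sq_nonneg (f i)
  have hcs := sq_sum_le_card_mul_sum_sq (s := s) (f := f)
  rw [← h] at hcs
  exact ⟨hnonneg, by nlinarith⟩

theorem Finset.sum_range_succ_eq_add_sum_fin_add {M : Type*} [AddCommMonoid M] (f : ℕ → M)
    {n : ℕ} (hn : 1 ≤ n) :
    ∑ j ∈ range (n + 1), f j = f 0 + ∑ m : Fin (n - 1), f (m + 1) + f n := by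
  obtain ⟨k, rfl⟩ : ∃ k, n = k + 1 := ⟨n - 1, by omega⟩
  rw [sum_range_succ, sum_range_succ', Nat.add_sub_cancel, Fin.sum_univ_eq_sum_range
    (fun m => f (m + 1)), add_comm (f 0)]

section Equilibrium

variable (Net : ℕ → Finset ℕ)

def nbhd (n : ℕ) : Finset ℕ := (Net n).filter (· < n)

/-- The paper's `Ŵ` for agent `n`; column `m : Fin (n - 1)` stands for coordinate `m + 1`. -/
noncomputable def eqWHat (n : ℕ) : Matrix {j // j ∈ nbhd Net n} (Fin (n - 1)) ℝ :=
  Matrix.of fun j m => eqW Net j.1 (m.1 + 1)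

noncomputable def eqBeta (n : ℕ) : {j // j ∈ nbhd Net n} → ℝ :=
  (fun j => ∑ m, eqWHat Net n j m) ᵥ* (eqWHat Net n * (eqWHat Net n)ᵀ)⁻¹

/-- The recursion in one formula: for an empty neighborhood the sum is empty. -/
theorem eqW_apply (n m : ℕ) :
    eqW Net n m =
      (if m = n then 1 else 0) + ∑ j : {j // j ∈ nbhd Net n}, eqBeta Net n j * eqW Net j m := by
  have h : eqW Net n = if (nbhd Net n).Nonempty then
      fun m => (if m = n then (1 : ℝ) else 0) +
        ∑ j : {j // j ∈ nbhd Net n}, eqBeta Net n j * eqW Net j m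
      else fun m => if m = n then (1 : ℝ) else 0 :=
    Nat.strongRecOn_eq _ _
  by_cases hne : (nbhd Net n).Nonempty
  · rw [h, if_pos hne]
  · have : IsEmpty {j // j ∈ nbhd Net n} := ⟨fun j => hne ⟨j.1, j.2⟩⟩
    rw [h, if_neg hne, Fintype.sum_empty, add_zero]

theorem lt_of_mem_nbhd {n : ℕ} (j : {j // j ∈ nbhd Net n}) : j.1 < n :=
  (mem_filter.mp j.2).2

theorem eqW_of_lt {n m : ℕ} (h : n < m) : eqW Net n m = 0 := by
  induction n using Nat.strong_induction_on generalizing m with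
  | _ n ih =>
    rw [eqW_apply, if_neg h.ne']
    simp [ih _ (lt_of_mem_nbhd Net _) ((lt_of_mem_nbhd Net _).trans h)]

theorem eqW_self (n : ℕ) : eqW Net n n = 1 := by
  rw [eqW_apply]
  simp [eqW_of_lt Net (lt_of_mem_nbhd Net _)]

variable {Net}

theorem eqW_zero (hNet : ∀ i, ∀ j ∈ Net i, 1 ≤ j) {n : ℕ} (hn : 1 ≤ n) :
    eqW Net n 0 = 0 := by
  induction n using Nat.strong_induction_on with
  | _ n ih =>
    rw [eqW_apply, if_neg (by omega)]
    refine zero_add _ |>.trans (sum_eq_zero fun j _ => ?_)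
    rw [ih _ (lt_of_mem_nbhd Net j) (hNet n j (mem_filter.mp j.2).1), mul_zero]

theorem eqW_succ (n : ℕ) (m : Fin (n - 1)) :
    eqW Net n (m + 1) = (eqWHat Net n).rowProj 1 m := by
  rw [eqW_apply, if_neg (by omega), zero_add]
  simp [eqBeta, rowProj, vecMul, dotProduct, eqWHat, mulVec]

theorem isUnit_det_eqWHat_mul_transpose (hNet : ∀ i, ∀ j ∈ Net i, 1 ≤ j) (n : ℕ) :
    IsUnit (eqWHat Net n * (eqWHat Net n)ᵀ).det := by
  have hpos (j : {j // j ∈ nbhd Net n}) : 1 ≤ j.1 := hNet n j (mem_filter.mp j.2).1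
  let pivot (j : {j // j ∈ nbhd Net n}) : Fin (n - 1) :=
    ⟨j.1 - 1, by have := lt_of_mem_nbhd Net j; have := hpos j; omega⟩
  refine isUnit_det_mul_transpose_self _ fun v =>
    eq_zero_of_vecMul_eq_zero_of_echelon _ pivot (fun j => ?_) (fun j j' hlt => ?_)
  · show eqW Net j (j.1 - 1 + 1) ≠ 0
    rw [Nat.sub_add_cancel (hpos j), eqW_self]
    exact one_ne_zero
  · show eqW Net j' (j.1 - 1 + 1) = 0
    rw [Nat.sub_add_cancel (hpos j)]
    exact eqW_of_lt Net hlt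

end Equilibrium

/-- In any network, the equilibrium weight recursion is well
defined and every agent's behavior has a signal-counting interpretation: for
every agent `i ≥ 1`, `Σ_j W_i(j) = Σ_j W_i(j)²`, and `r_i := Σ_j W_i(j)`
satisfies `1 ≤ r_i ≤ i`. -/
theorem signal_counting_interpretation
    (Net : ℕ → Finset ℕ) (hNet : ∀ i, ∀ j ∈ Net i, 1 ≤ j ∧ j < i)
    (i : ℕ) (hi : 1 ≤ i) :
    (∑ j ∈ Finset.range (i + 1), eqW Net i j)
        = (∑ j ∈ Finset.range (i + 1), (eqW Net i j) ^ 2) ∧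
    1 ≤ rcount Net i ∧ rcount Net i ≤ (i : ℝ) := by
  have hNet' : ∀ i, ∀ j ∈ Net i, 1 ≤ j := fun i j hj => (hNet i j hj).1
  set p := (eqWHat Net i).rowProj 1
  have hsum (g : ℝ → ℝ) (hg : g 0 = 0) :
      ∑ j ∈ range (i + 1), g (eqW Net i j) = ∑ m, g (p m) + g 1 := by
    rw [sum_range_succ_eq_add_sum_fin_add _ hi, eqW_zero hNet' hi, eqW_self, hg, zero_add]
    simp only [eqW_succ, p]
  have hproj : ∑ m, p m = ∑ m, p m ^ 2 := by
    simpa [dotProduct, sq] using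
      (rowProj_dotProduct_self _ (isUnit_det_eqWHat_mul_transpose hNet' i) 1).symm
  obtain ⟨hp₀, hp_le⟩ := sum_nonneg_and_le_card_of_sum_eq_sum_sq univ p hproj
  have hr : rcount Net i = ∑ m, p m + 1 := hsum id rfl
  have hr₂ : ∑ j ∈ range (i + 1), eqW Net i j ^ 2 = ∑ m, p m ^ 2 + 1 := by
    simpa only [one_pow] using hsum (· ^ 2) (zero_pow two_ne_zero)
  have hsq : rcount Net i = ∑ j ∈ range (i + 1), eqW Net i j ^ 2 := by rw [hr, hr₂, hproj]
  rw [card_univ, Fintype.card_fin, Nat.cast_sub hi, Nat.cast_one] at hp_le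
  exact ⟨hsq, by linarith, by linarith⟩
end

section
/- Let d, m ≥ 1 and let Ŵ be a d×m real matrix with linearly independent rows (so ŴŴᵀ is invertible). Let 𝟙 ∈ ℝ^m be the all-ones vector, β := 𝟙ᵀ Ŵᵀ (ŴŴᵀ)⁻¹ ∈ ℝ^d, and w := βŴ ∈ ℝ^m. Then Σ_{k=1}^m w_k = Σ_{k=1}^m w_k². Consequently, a rational agent who best responds to predecessors using arbitrary log-linear strategies (so that the predecessors' log-actions are ℓ = Ŵλ for an arbitrary weight matrix Ŵ applied to the i.i.d. conditionally Gaussian log-signals λ) has a log-action λ_I + Σ_k β_k ℓ_k whose total weight vector (w, 1) satisfies sum-of-weights = sum-of-squared-weights, i.e. her behavior has a signal-counting interpretation. -/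
/-!
With `G := Ŵ Ŵᵀ`, the vector `β = 𝟙ᵀ Ŵᵀ G⁻¹` solves the normal equations `β G = 𝟙ᵀ Ŵᵀ`, so
`w = β Ŵ` is the orthogonal projection of `𝟙` onto the row space of `Ŵ`. Hence
`⟪w, 𝟙⟫ = ⟪w, w⟫`, which is `Σ w_k = Σ w_k²`. The Gram matrix `G` is invertible because it is
positive definite when the rows of `Ŵ` are linearly independent.
-/

open Matrix Finset

namespace Matrix

variable {ι κ : Type*} [Fintype ι] [Fintype κ]

theorem isUnit_mul_transpose_self_of_linearIndependent_row {K : Type*} [Field K]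
    [PartialOrder K] [StarRing K] [StarOrderedRing K] [TrivialStar K] [DecidableEq ι]
    {A : Matrix ι κ K} (hA : LinearIndependent K A.row) : IsUnit (A * Aᵀ) := by
  rw [← conjTranspose_eq_transpose_of_trivial]
  exact (PosDef.mul_conjTranspose_self A (vecMul_injective_iff.mpr hA)).isUnit

theorem vecMul_nonsing_inv_vecMul_cancel {R : Type*} [CommRing R] [DecidableEq ι]
    {G : Matrix ι ι R} (hG : IsUnit G) (v : ι → R) : v ᵥ* G⁻¹ ᵥ* G = v := by
  rw [vecMul_vecMul, nonsing_inv_mul _ ((isUnit_iff_isUnit_det _).mp hG), vecMul_one]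

theorem dotProduct_self_eq_dotProduct_of_normal_equations {R : Type*} [CommSemiring R]
    {A : Matrix ι κ R} {u : κ → R} {β : ι → R} (hβ : β ᵥ* (A * Aᵀ) = u ᵥ* Aᵀ) :
    β ᵥ* A ⬝ᵥ β ᵥ* A = β ᵥ* A ⬝ᵥ u :=
  calc β ᵥ* A ⬝ᵥ β ᵥ* A = β ᵥ* (A * Aᵀ) ⬝ᵥ β := by
        rw [← vecMul_vecMul, ← dotProduct_mulVec (β ᵥ* A), mulVec_transpose]
    _ = β ᵥ* A ⬝ᵥ u := by
        rw [hβ, dotProduct_comm, ← mulVec_transpose, transpose_transpose, dotProduct_mulVec]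

end Matrix

theorem best_response_signal_counting_general (d m : ℕ)
    (What : Matrix (Fin d) (Fin m) ℝ)
    (hrows : LinearIndependent ℝ (fun i : Fin d => What i)) :
    ∀ β w : _, β = Matrix.vecMul (Matrix.vecMul (fun _ : Fin m => (1 : ℝ)) What.transpose)
        ((What * What.transpose)⁻¹) →
      w = Matrix.vecMul β What →
      ((∑ k, w k) = ∑ k, (w k) ^ 2) ∧
      ((∑ k, w k) + 1 = (∑ k, (w k) ^ 2) + 1 ^ 2) := by
  intro β w hβ hw
  have hnormal : β ᵥ* (What * Whatᵀ) = (fun _ => 1) ᵥ* Whatᵀ := hβ ▸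
    vecMul_nonsing_inv_vecMul_cancel (isUnit_mul_transpose_self_of_linearIndependent_row hrows) _
  have hproj : w ⬝ᵥ w = w ⬝ᵥ 1 :=
    hw ▸ dotProduct_self_eq_dotProduct_of_normal_equations hnormal
  have hcount : ∑ k, w k = ∑ k, w k ^ 2 := by
    rw [← dotProduct_one, ← hproj]
    simp only [dotProduct, sq]
  exact ⟨hcount, by rw [hcount, one_pow]⟩

/-- Let `Ŵ` be a `d×m` real matrix with linearly independent rows,
`β := 𝟙ᵀ Ŵᵀ (ŴŴᵀ)⁻¹` and `w := βŴ`. Then `Σ w_k = Σ w_k²`; consequently the total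
weight vector `(w, 1)` of a rational agent best responding to arbitrary log-linear
predecessors also satisfies sum-of-weights = sum-of-squared-weights, i.e. her
behavior has a signal-counting interpretation. -/
theorem best_response_signal_counting (d m : ℕ) (hd : 1 ≤ d) (hm : 1 ≤ m)
    (What : Matrix (Fin d) (Fin m) ℝ)
    (hrows : LinearIndependent ℝ (fun i : Fin d => What i)) :
    ∀ β w : _, β = Matrix.vecMul (Matrix.vecMul (fun _ : Fin m => (1 : ℝ)) What.transpose)
        ((What * What.transpose)⁻¹) →
      w = Matrix.vecMul β What →
      ((∑ k, w k) = ∑ k, (w k) ^ 2) ∧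
      ((∑ k, w k) + 1 = (∑ k, (w k) ^ 2) + 1 ^ 2) :=
  best_response_signal_counting_general d m What hrows
end

section
/- Consider the maximal generations network with generation size K ≥ 1, i.e. the generations network with observation sets Ψ_k = {1,…,K} for every k, and let r_i be the signal counts from the equilibrium weight recursion. Then: (i) the aggregative efficiency exists and equals lim_{i→∞} r_i/i = (2K−1)/K², so social learning aggregates fewer than two signals per generation asymptotically for every K; and (ii) starting from the third generation, every generation aggregates at most three signals more than the previous one: for any K and any agents i in generation t and i′ in generation t−1 with t ≥ 3, r_i − r_{i′} ≤ 3. -/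
open Matrix Finset Filter

/-- The generations network with generation size `K` and observation sets `Ψ`:
`N(i) = ∅` for `1 ≤ i ≤ K`, and `N((t−1)K+k) = {(t−2)K+ψ : ψ ∈ Ψ_k}` for `t ≥ 2`,
`1 ≤ k ≤ K`. -/
def genNet (K : ℕ) (Ψ : ℕ → Finset ℕ) : ℕ → Finset ℕ := fun i =>
  if i ≤ K then ∅
  else (Ψ ((i - 1) % K + 1)).image (fun ψ => ((i - 1) / K - 1) * K + ψ)

/-!
By induction on generations, every agent `i` of generation `s + 1` has `W_i = e_i + w_s` for a
vector `w_s` shared by the whole generation and supported on earlier agents, with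
`∑ w_s = ∑ w_s ^ 2 = R_{s+1} - 1`. The rows observed by an agent of the next generation thus have
Gram matrix `I + (R - 1) J` and row sums `R`, so all its weights equal `R / (K (R - 1) + 1)`; this
gives `w_{s+1}` and `R_{s+2} = 1 + K R ^ 2 / (K (R - 1) + 1)`. The increments
`R_{n+1} - R_n = 1 + (K - 1) R_n / (K (R_n - 1) + 1)` tend to `(2K - 1) / K`, hence so does `R_n / n`
(Cesàro), and agent `i` lies in generation `⌈i / K⌉`. Once `R_n ≥ 2` the increment is at most `3`.
-/

open Topology

namespace Matrix

variable {ι 𝕜 : Type*} [Fintype ι] [DecidableEq ι] [Field 𝕜]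

theorem inv_one_add_of_const {q : 𝕜} (hq : Fintype.card ι * q + 1 ≠ 0) :
    (1 + of fun _ _ : ι => q)⁻¹ = 1 - of fun _ _ : ι => q / (Fintype.card ι * q + 1) := by
  refine inv_eq_right_inv ?_
  ext j l
  simp only [mul_apply, add_apply, one_apply, of_apply, sub_apply, mul_sub, mul_ite, mul_one,
    mul_zero, add_mul, ite_mul, one_mul, zero_mul, sum_sub_distrib, sum_ite_eq', mem_univ,
    if_true, sum_add_distrib, sum_ite_eq, sum_const, card_univ, nsmul_eq_mul]
  rw [add_sub_assoc, add_eq_left]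
  linear_combination -(div_mul_cancel₀ q hq)

theorem vecMul_const_inv_one_add_of_const {q : 𝕜} (hq : Fintype.card ι * q + 1 ≠ 0) (R : 𝕜) :
    vecMul (fun _ => R) (1 + of fun _ _ : ι => q)⁻¹ = fun _ => R / (Fintype.card ι * q + 1) := by
  ext j
  simp only [vecMul, dotProduct, inv_one_add_of_const hq, sub_apply, one_apply, of_apply, mul_sub,
    mul_ite, mul_one, mul_zero, sum_sub_distrib, sum_ite_eq', mem_univ, if_true, sum_const,
    card_univ, nsmul_eq_mul]
  field_simp
  ring

end Matrix

theorem sum_fin_pred_succ (f : ℕ → ℝ) (n : ℕ) :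
    ∑ m : Fin (n - 1), f (m + 1) = ∑ m ∈ Ico 1 n, f m := by
  rw [Fin.sum_univ_eq_sum_range (fun m => f (m + 1)), sum_Ico_eq_sum_range]
  simp only [add_comm]

theorem sum_single_add_mul_single_add {S : Finset ℕ} {w : ℕ → ℝ} {j l : ℕ} (hj : j ∈ S)
    (hl : l ∈ S) (hwj : w j = 0) (hwl : w l = 0) :
    ∑ m ∈ S, ((if m = j then 1 else 0) + w m) * ((if m = l then 1 else 0) + w m) =
      (if j = l then 1 else 0) + ∑ m ∈ S, w m ^ 2 := by
  simp [add_mul, mul_add, sum_add_distrib, ite_mul, mul_ite, hj, hl, hwj, hwl, sq, eq_comm]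

theorem sum_single_add {S : Finset ℕ} {w : ℕ → ℝ} {j : ℕ} (hj : j ∈ S) :
    ∑ m ∈ S, ((if m = j then 1 else 0) + w m) = 1 + ∑ m ∈ S, w m := by
  simp [sum_add_distrib, hj]

theorem eqW_eq (Net : ℕ → Finset ℕ) (n : ℕ) :
    eqW Net n =
      let nb := (Net n).filter (· < n)
      if nb.Nonempty then
        let What : Matrix {j // j ∈ nb} (Fin (n - 1)) ℝ := .of fun j m => eqW Net j.1 (m.1 + 1)
        let beta := vecMul (fun j => ∑ m, What j m) (What * Whatᵀ)⁻¹
        fun m => (if m = n then 1 else 0) + ∑ j : {j // j ∈ nb}, beta j * eqW Net j.1 m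
      else fun m => if m = n then 1 else 0 := by
  rw [eqW, Nat.strongRecOn_eq]
  rfl

theorem eqW_of_filter_eq_empty {Net : ℕ → Finset ℕ} {n : ℕ} (h : (Net n).filter (· < n) = ∅) :
    eqW Net n = fun m => if m = n then 1 else 0 := by
  simp [eqW_eq, h]

theorem eqW_eq_of_gram {Net : ℕ → Finset ℕ} {n : ℕ} {R q : ℝ}
    (hq : ((Net n).filter (· < n)).card * q + 1 ≠ 0)
    (hgram : ∀ j ∈ (Net n).filter (· < n), ∀ l ∈ (Net n).filter (· < n),
      ∑ m ∈ Ico 1 n, eqW Net j m * eqW Net l m = (if j = l then 1 else 0) + q)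
    (hrow : ∀ j ∈ (Net n).filter (· < n), ∑ m ∈ Ico 1 n, eqW Net j m = R) :
    eqW Net n = fun m => (if m = n then 1 else 0) +
      R / (((Net n).filter (· < n)).card * q + 1) * ∑ j ∈ (Net n).filter (· < n), eqW Net j m := by
  rcases ((Net n).filter (· < n)).eq_empty_or_nonempty with hnb | hnb
  · simp [eqW_of_filter_eq_empty hnb, hnb]
  rw [eqW_eq]
  simp only [hnb, if_true]
  set nb := (Net n).filter (· < n)
  set What : Matrix {j // j ∈ nb} (Fin (n - 1)) ℝ := .of fun j m => eqW Net j.1 (m.1 + 1)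
  have hWW : What * Whatᵀ = 1 + .of fun _ _ => q := by
    ext j l
    simp only [What, Matrix.mul_apply, Matrix.transpose_apply, Matrix.of_apply,
      sum_fin_pred_succ (fun m => eqW Net j m * eqW Net l m), hgram j j.2 l l.2,
      Matrix.add_apply, Matrix.one_apply, Subtype.ext_iff]
  have hrow' : (fun j => ∑ m, What j m) = fun _ => R := by
    ext j
    simp only [What, Matrix.of_apply, sum_fin_pred_succ (eqW Net j), hrow j j.2]
  rw [← Fintype.card_coe nb] at hq ⊢
  rw [hWW, hrow', Matrix.vecMul_const_inv_one_add_of_const hq]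
  ext m
  rw [← mul_sum, sum_coe_sort nb (fun j => eqW Net j m)]

abbrev maxGenNet (K : ℕ) : ℕ → Finset ℕ := genNet K fun _ => Icc 1 K

theorem maxGenNet_filter_lt_of_le {K i : ℕ} (hi : i ≤ K) : (maxGenNet K i).filter (· < i) = ∅ := by
  simp [genNet, hi]

theorem maxGenNet_filter_lt {K s i : ℕ} (h₁ : (s + 1) * K < i) (h₂ : i ≤ (s + 2) * K) :
    (maxGenNet K i).filter (· < i) = Ioc (s * K) ((s + 1) * K) := by
  have hdiv : (i - 1) / K = s + 1 := Nat.div_eq_of_lt_le (by omega) (by omega : i - 1 < (s + 2) * K)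
  have hgen : maxGenNet K i = Ioc (s * K) ((s + 1) * K) := by
    simp only [maxGenNet, genNet]
    rw [if_neg (by nlinarith), hdiv, image_add_left_Icc, Nat.add_sub_cancel,
      ← Icc_add_one_left_eq_Ioc, add_one_mul]
  rw [hgen, filter_true_of_mem fun j hj => by have := (mem_Ioc.mp hj).2; omega]

noncomputable def obsWeight (K : ℕ) (x : ℝ) : ℝ := x / (K * (x - 1) + 1)

noncomputable def genSignals (K : ℕ) : ℕ → ℝ
  | 0 => 0
  | n + 1 => 1 + K * genSignals K n * obsWeight K (genSignals K n)

noncomputable def genWeight (K : ℕ) : ℕ → ℕ → ℝ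
  | 0 => 0
  | s + 1 => fun m => obsWeight K (genSignals K (s + 1)) *
      ((if m ∈ Ioc (s * K) ((s + 1) * K) then 1 else 0) + K * genWeight K s m)

theorem obsWeight_mul_denom (K : ℕ) {x : ℝ} (hx : 1 ≤ x) :
    obsWeight K x * (K * (x - 1) + 1) = x :=
  div_mul_cancel₀ x (by positivity)

theorem one_le_genSignals_succ (K n : ℕ) : 1 ≤ genSignals K (n + 1) := by
  induction n with
  | zero => simp [genSignals]
  | succ n ih =>
    have hβ : 0 ≤ obsWeight K (genSignals K (n + 1)) := div_nonneg (by linarith) (by positivity)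
    rw [genSignals]
    exact le_add_of_nonneg_right (mul_nonneg (mul_nonneg K.cast_nonneg (by linarith)) hβ)

theorem genWeight_eq_zero (K s : ℕ) {m : ℕ} (hm : m ∉ Icc 1 (s * K)) : genWeight K s m = 0 := by
  induction s with
  | zero => rfl
  | succ s ih =>
    simp only [mem_Icc, add_one_mul] at hm
    have hIoc : m ∉ Ioc (s * K) ((s + 1) * K) := by rw [mem_Ioc, add_one_mul]; omega
    have hIcc : m ∉ Icc 1 (s * K) := by rw [mem_Icc]; omega
    simp [genWeight, hIoc, ih hIcc]

theorem genSignals_succ_sub_one (K s : ℕ) :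
    genSignals K (s + 1) - 1 = K * genSignals K s * obsWeight K (genSignals K s) := by
  rw [genSignals]; ring

theorem sum_indicator_Ioc (K s : ℕ) {S : Finset ℕ} (hS : Ioc (s * K) ((s + 1) * K) ⊆ S) :
    ∑ m ∈ S, (if m ∈ Ioc (s * K) ((s + 1) * K) then (1 : ℝ) else 0) = K := by
  rw [sum_ite_mem, inter_eq_right.mpr hS, sum_const, Nat.card_Ioc, add_one_mul,
    Nat.add_sub_cancel_left, nsmul_one]

theorem Icc_subset_of_Icc_succ_subset (K s : ℕ) {S : Finset ℕ} (hS : Icc 1 ((s + 1) * K) ⊆ S) :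
    Icc 1 (s * K) ⊆ S ∧ Ioc (s * K) ((s + 1) * K) ⊆ S := by
  refine ⟨(Icc_subset_Icc_right ?_).trans hS, fun m hm => hS ?_⟩
  · rw [add_one_mul]; omega
  · rw [mem_Ioc] at hm; rw [mem_Icc]; omega

theorem sum_genWeight (K s : ℕ) {S : Finset ℕ} (hS : Icc 1 (s * K) ⊆ S) :
    ∑ m ∈ S, genWeight K s m = genSignals K (s + 1) - 1 := by
  induction s generalizing S with
  | zero => simp [genWeight, genSignals]
  | succ s ih =>
    obtain ⟨hIcc, hIoc⟩ := Icc_subset_of_Icc_succ_subset K s hS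
    simp only [genWeight]
    rw [← mul_sum, sum_add_distrib, ← mul_sum, sum_indicator_Ioc K s hIoc, ih hIcc,
      genSignals_succ_sub_one K (s + 1)]
    ring

theorem sum_genWeight_sq (K s : ℕ) {S : Finset ℕ} (hS : Icc 1 (s * K) ⊆ S) :
    ∑ m ∈ S, genWeight K s m ^ 2 = genSignals K (s + 1) - 1 := by
  induction s generalizing S with
  | zero => simp [genWeight, genSignals]
  | succ s ih =>
    obtain ⟨hIcc, hIoc⟩ := Icc_subset_of_Icc_succ_subset K s hS
    set β := obsWeight K (genSignals K (s + 1))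
    have hsq : ∀ m, genWeight K (s + 1) m ^ 2 =
        β ^ 2 * ((if m ∈ Ioc (s * K) ((s + 1) * K) then 1 else 0) + K ^ 2 * genWeight K s m ^ 2) := by
      intro m
      by_cases hm : m ∈ Ioc (s * K) ((s + 1) * K)
      · have : m ∉ Icc 1 (s * K) := by rw [mem_Ioc] at hm; rw [mem_Icc]; omega
        simp [genWeight, hm, β, genWeight_eq_zero K s this]
      · simp only [genWeight, hm, if_false, β]; ring
    have hβ := obsWeight_mul_denom K (one_le_genSignals_succ K s)
    simp only [hsq]
    rw [← mul_sum, sum_add_distrib, ← mul_sum, sum_indicator_Ioc K s hIoc, ih hIcc,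
      genSignals_succ_sub_one K (s + 1)]
    linear_combination (K * β) * hβ

theorem eqW_maxGenNet (K s i : ℕ) (h₁ : s * K < i) (h₂ : i ≤ (s + 1) * K) :
    eqW (maxGenNet K) i = fun m => (if m = i then 1 else 0) + genWeight K s m := by
  induction s generalizing i with
  | zero =>
    rw [eqW_of_filter_eq_empty (maxGenNet_filter_lt_of_le (by simpa using h₂))]
    simp [genWeight]
  | succ s ih =>
    set R := genSignals K (s + 1)
    have hR := one_le_genSignals_succ K s
    have hnb := maxGenNet_filter_lt h₁ h₂
    have hcard : #(Ioc (s * K) ((s + 1) * K)) = K := by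
      rw [Nat.card_Ioc, add_one_mul, Nat.add_sub_cancel_left]
    have hprev : ∀ j ∈ Ioc (s * K) ((s + 1) * K),
        eqW (maxGenNet K) j = fun m => (if m = j then 1 else 0) + genWeight K s m :=
      fun j hj => ih j (mem_Ioc.mp hj).1 (mem_Ioc.mp hj).2
    have hsub : ∀ j ∈ Ioc (s * K) ((s + 1) * K), j ∈ Ico 1 i ∧ genWeight K s j = 0 := by
      intro j hj
      rw [mem_Ioc] at hj
      exact ⟨mem_Ico.mpr (by omega), genWeight_eq_zero K s (by rw [mem_Icc]; omega)⟩
    have hIcc : Icc 1 (s * K) ⊆ Ico 1 i := fun m hm => by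
      rw [mem_Icc] at hm; rw [mem_Ico]; rw [add_one_mul] at h₁; omega
    rw [eqW_eq_of_gram (R := R) (q := R - 1)]
    · ext m
      simp only [hnb, hcard]
      rw [sum_congr rfl fun j hj => congrFun (hprev j hj) m, sum_add_distrib, sum_ite_eq, sum_const,
        hcard, nsmul_eq_mul]
      rfl
    · rw [hnb, hcard]
      exact (add_pos_of_nonneg_of_pos (mul_nonneg K.cast_nonneg (sub_nonneg.mpr hR)) one_pos).ne'
    · intro j hj l hl
      rw [hnb] at hj hl
      rw [hprev j hj, hprev l hl, sum_single_add_mul_single_add (hsub j hj).1 (hsub l hl).1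
        (hsub j hj).2 (hsub l hl).2, sum_genWeight_sq K s hIcc]
    · intro j hj
      rw [hnb] at hj
      rw [hprev j hj, sum_single_add (hsub j hj).1, sum_genWeight K s hIcc]
      ring

theorem rcount_maxGenNet (K s i : ℕ) (h₁ : s * K < i) (h₂ : i ≤ (s + 1) * K) :
    rcount (maxGenNet K) i = genSignals K (s + 1) := by
  have hIcc : Icc 1 (s * K) ⊆ range (i + 1) := fun m hm => by
    rw [mem_Icc] at hm; rw [mem_range]; omega
  rw [rcount, eqW_maxGenNet K s i h₁ h₂, sum_single_add (self_mem_range_succ i),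
    sum_genWeight K s hIcc]
  ring

abbrev generation (K i : ℕ) : ℕ := (i - 1) / K + 1

theorem rcount_maxGenNet_eq_generation {K i : ℕ} (hK : 1 ≤ K) (hi : 1 ≤ i) :
    rcount (maxGenNet K) i = genSignals K (generation K i) :=
  rcount_maxGenNet K _ i (by have := Nat.div_mul_le_self (i - 1) K; omega)
    (by have := Nat.lt_div_mul_add (a := i - 1) hK; rw [add_one_mul]; omega)

theorem tendsto_generation_atTop {K : ℕ} (hK : 1 ≤ K) : Tendsto (generation K) atTop atTop :=
  (tendsto_add_atTop_nat 1).comp <|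
    (Nat.tendsto_div_const_atTop (by omega)).comp (tendsto_sub_atTop_nat 1)

theorem tendsto_generation_div {K : ℕ} (hK : 1 ≤ K) :
    Tendsto (fun i => (generation K i : ℝ) / i) atTop (𝓝 (1 / K)) := by
  have hK' : (0 : ℝ) < K := by exact_mod_cast hK
  have hlow (i : ℕ) : (i : ℝ) ≤ generation K i * K := by
    have := Nat.lt_div_mul_add (a := i - 1) hK
    exact_mod_cast (by rw [add_one_mul]; omega : i ≤ generation K i * K)
  have hup (i : ℕ) : (generation K i : ℝ) * K ≤ i + K := by
    have := Nat.div_mul_le_self (i - 1) K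
    exact_mod_cast (by rw [add_one_mul]; omega : generation K i * K ≤ i + K)
  have hupper : Tendsto (fun i : ℕ => 1 / (K : ℝ) + 1 / i) atTop (𝓝 (1 / K)) := by
    simpa using (tendsto_const_nhds (x := 1 / (K : ℝ))).add tendsto_one_div_atTop_nhds_zero_nat
  refine tendsto_of_tendsto_of_tendsto_of_le_of_le' tendsto_const_nhds hupper ?_ ?_ <;>
    filter_upwards [eventually_gt_atTop 0] with i hi <;>
    have hi' : (0 : ℝ) < i := by exact_mod_cast hi
  · rw [div_le_div_iff₀ hK' hi', one_mul]
    exact hlow i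
  · rw [div_add_div _ _ hK'.ne' hi'.ne', div_le_div_iff₀ hi' (by positivity)]
    nlinarith [hup i]

theorem obsWeight_genSignals_nonneg (K n : ℕ) : 0 ≤ obsWeight K (genSignals K n) := by
  cases n with
  | zero => simp [genSignals, obsWeight]
  | succ n =>
    have := one_le_genSignals_succ K n
    exact div_nonneg (by linarith) (by positivity)

theorem genSignals_succ_sub (K n : ℕ) :
    genSignals K (n + 1) - genSignals K n = 1 + (K - 1) * obsWeight K (genSignals K n) := by
  cases n with
  | zero => simp [genSignals, obsWeight]
  | succ n =>
    rw [genSignals]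
    linear_combination obsWeight_mul_denom K (one_le_genSignals_succ K n)

theorem one_le_genSignals_succ_sub {K : ℕ} (hK : 1 ≤ K) (n : ℕ) :
    1 ≤ genSignals K (n + 1) - genSignals K n := by
  have hK' : (1 : ℝ) ≤ K := by exact_mod_cast hK
  rw [genSignals_succ_sub]
  nlinarith [obsWeight_genSignals_nonneg K n]

theorem natCast_le_genSignals {K : ℕ} (hK : 1 ≤ K) (n : ℕ) : (n : ℝ) ≤ genSignals K n := by
  induction n with
  | zero => simp [genSignals]
  | succ n ih => push_cast; linarith [one_le_genSignals_succ_sub hK n]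

theorem genSignals_succ_sub_le_three {K n : ℕ} (hK : 1 ≤ K) (hn : 2 ≤ n) :
    genSignals K (n + 1) - genSignals K n ≤ 3 := by
  obtain ⟨n, rfl⟩ := Nat.exists_eq_add_of_le' hn
  set x := genSignals K (n + 2)
  have hx : 2 ≤ x := by have := natCast_le_genSignals hK (n + 2); push_cast at this; linarith
  have hβ := obsWeight_mul_denom K (x := x) (by linarith)
  have hD : 0 < (K : ℝ) * (x - 1) + 1 := by have := K.cast_nonneg (α := ℝ); nlinarith
  rw [genSignals_succ_sub]
  by_contra h
  nlinarith [mul_lt_mul_of_pos_right (not_le.mp h) hD, K.cast_nonneg (α := ℝ)]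

theorem tendsto_obsWeight_atTop {K : ℕ} (hK : 1 ≤ K) :
    Tendsto (obsWeight K) atTop (𝓝 (1 / K)) := by
  have hK' : (K : ℝ) ≠ 0 := by positivity
  have h : Tendsto (fun x : ℝ => (K + (1 - K) / x)⁻¹) atTop (𝓝 (K + 0)⁻¹) :=
    (tendsto_const_nhds.add (tendsto_const_nhds.div_atTop tendsto_id)).inv₀ (by simpa using hK')
  rw [add_zero, ← one_div] at h
  refine h.congr' ?_
  filter_upwards [eventually_gt_atTop 0] with x hx
  rw [obsWeight]
  field_simp
  ring

theorem tendsto_genSignals_succ_sub {K : ℕ} (hK : 1 ≤ K) :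
    Tendsto (fun n => genSignals K (n + 1) - genSignals K n) atTop (𝓝 ((2 * K - 1) / K)) := by
  have hK' : (K : ℝ) ≠ 0 := by positivity
  have hR : Tendsto (genSignals K) atTop atTop :=
    tendsto_atTop_mono (natCast_le_genSignals hK) tendsto_natCast_atTop_atTop
  have h := ((tendsto_obsWeight_atTop hK).comp hR).const_mul ((K : ℝ) - 1) |>.const_add 1
  convert h using 2 with n
  · exact genSignals_succ_sub K n
  · field_simp; ring

theorem tendsto_genSignals_div {K : ℕ} (hK : 1 ≤ K) :
    Tendsto (fun n => genSignals K n / n) atTop (𝓝 ((2 * K - 1) / K)) := by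
  refine (tendsto_genSignals_succ_sub hK).cesaro.congr fun n => ?_
  rw [sum_range_sub (genSignals K), genSignals, sub_zero, inv_mul_eq_div]

/-- In the maximal generations network with generation size `K ≥ 1`
(observation sets `Ψ_k = {1,…,K}` for every `k`): (i) the aggregative efficiency
exists and equals `(2K−1)/K²`; (ii) for `t ≥ 3`, any agent in generation `t`
aggregates at most three signals more than any agent in generation `t−1`. -/
theorem maximal_generations_rate (K : ℕ) (hK : 1 ≤ K) :
    Tendsto (fun i : ℕ => rcount (genNet K (fun _ => Finset.Icc 1 K)) i / (i : ℝ))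
        atTop (nhds ((2 * (K : ℝ) - 1) / (K : ℝ) ^ 2)) ∧
    (∀ t : ℕ, 3 ≤ t → ∀ k ∈ Finset.Icc 1 K, ∀ k' ∈ Finset.Icc 1 K,
      rcount (genNet K (fun _ => Finset.Icc 1 K)) ((t - 1) * K + k)
        - rcount (genNet K (fun _ => Finset.Icc 1 K)) ((t - 2) * K + k') ≤ 3) := by
  constructor
  · have h := ((tendsto_genSignals_div hK).comp (tendsto_generation_atTop hK)).mul
      (tendsto_generation_div hK)
    rw [div_mul_div_comm, mul_one, ← sq] at h
    refine h.congr' ?_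
    filter_upwards [eventually_ge_atTop 1] with i hi
    rw [Function.comp_apply, rcount_maxGenNet_eq_generation hK hi, div_mul_div_cancel₀ (by positivity)]
  · intro t ht k hk k' hk'
    rw [mem_Icc] at hk hk'
    rw [rcount_maxGenNet K (t - 1) _ (by omega) (by rw [add_one_mul]; omega),
      rcount_maxGenNet K (t - 2) _ (by omega) (by rw [add_one_mul]; omega),
      show t - 1 + 1 = t - 2 + 1 + 1 by omega]
    exact genSignals_succ_sub_le_three hK (by omega)
end

section
/- Suppose the observation sets (Ψ_k)_{k=1}^K of a generations network are strongly connected and symmetric with parameters (d, c) where c ≥ 1. Then there exists a log-linear (but non-equilibrium) strategy profile — i.e. real coefficients b_{i,0} and (b_{i,j})_{j∈N(i)} defining weight vectors W′_i recursively by W′_i := b_{i,0}·e_i + Σ_{j∈N(i)} b_{i,j}·W′_j — such that every row satisfies the signal-counting identity Σ_j W′_i(j) = Σ_j (W′_i(j))², and for every positive real K₀ < K there exists T such that for all t ≥ T and all 1 ≤ k ≤ K, the agent i = (t−1)K+k satisfies Σ_j W′_i(j) > (t−1)K₀ (i.e. social learning under this profile aggregates more than (t−1)K₀ signals by agent (t−1)K+k).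 -/
/-!
Let every agent add her own log-signal to the average of her neighbours' log-actions, giving
weight vectors `w i = e i + d⁻¹ ∑_{j ∈ N(i)} w j`. Rescaling row `i` by
`α i = (∑ w i) / ∑ (w i)²` keeps the profile log-linear (with `b i j = α i d⁻¹ / α j`) and
enforces the signal-counting identity; agent `i` then aggregates `(∑ w i)² / ∑ (w i)²` signals.

Every row of generation `g + 1` sums to `g + 1`, and the Gram matrix of that generation is
`a g • 1 + b g • J` with `a (g+1) = 1 + ρ a g`, `b (g+1) = b g + γ a g`, `ρ = (d - c)/d²`,
`γ = c/d²`. Hence `a g ≤ (1 - ρ)⁻¹` and `b g ≤ g γ (1 - ρ)⁻¹ = g / K`, the last equality being the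
symmetric-design identity `c (K - 1) = d (d - 1)`. So agent `(t-1)K + k` aggregates at least
`t² / ((1 - ρ)⁻¹ + (t - 1)/K) ≈ t K` signals. Strong connectivity guarantees that every position
is observed, which excludes the degenerate design where all `Ψ k` equal one proper subset of
`{1, …, K}` and the identity fails.
-/

open Finset Filter

/-- There is a directed path in the network from `a` to `b`. -/
def HasPath (Net : ℕ → Finset ℕ) (a b : ℕ) : Prop :=
  ∃ (L : ℕ) (f : ℕ → ℕ), f 0 = a ∧ f L = b ∧ ∀ s < L, f (s + 1) ∈ Net (f s)

section Design

open Matrix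

theorem Matrix.design_identity_of_lt {ι : Type*} [Fintype ι] [DecidableEq ι] [Nonempty ι]
    (M : Matrix ι ι ℝ) {c d : ℝ} (hc : 0 ≤ c) (hcd : c < d) (hrow : ∀ k, ∑ ψ, M k ψ = d)
    (hgram : M * Mᵀ = Matrix.of fun k k' => if k = k' then d else c) :
    c * (Fintype.card ι - 1) = d * (d - 1) := by
  have hgram_mulVec : ∀ v k, (M *ᵥ Mᵀ *ᵥ v) k = (d - c) * v k + c * ∑ k', v k' := by
    intro v k
    have (k' : ι) : (if k = k' then d else c) * v k' =
        (d - c) * (if k = k' then v k' else 0) + c * v k' := by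
      split_ifs <;> ring
    rw [mulVec_mulVec, hgram]
    simp only [mulVec, dotProduct, of_apply, this, sum_add_distrib, ← mul_sum, sum_ite_eq,
      mem_univ, if_true]
  -- `M Mᵀ = (d - c) • 1 + c • J` is positive definite, so `M` is invertible, and comparing
  -- `M (Mᵀ 1)` with `M 1` shows that all column sums of `M` coincide.
  have hunit : IsUnit M := by
    rw [← isUnit_transpose, isUnit_iff_isUnit_det, isUnit_iff_ne_zero, Ne,
      ← exists_mulVec_eq_zero_iff]
    rintro ⟨v, hv, hMv⟩
    have hquad : (d - c) * ∑ k, v k ^ 2 + c * (∑ k, v k) ^ 2 = 0 := by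
      have hexp (k : ι) : v k * ((d - c) * v k + c * ∑ k', v k') =
          (d - c) * v k ^ 2 + (c * ∑ k', v k') * v k := by ring
      have := congrArg (v ⬝ᵥ M *ᵥ ·) hMv
      simp only [mulVec_zero, dotProduct_zero] at this
      simp only [dotProduct, hgram_mulVec, hexp, sum_add_distrib, ← mul_sum] at this
      linarith
    have hsq : ∑ k, v k ^ 2 = 0 := by
      nlinarith [sum_nonneg fun k (_ : k ∈ univ) => sq_nonneg (v k), sq_nonneg (∑ k, v k)]
    exact hv (funext fun k => pow_eq_zero_iff two_ne_zero |>.mp <|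
      (sum_eq_zero_iff_of_nonneg fun k _ => sq_nonneg (v k)).mp hsq k (mem_univ k))
  have hcol : Mᵀ *ᵥ (fun _ => d) = fun _ => d - c + c * Fintype.card ι := by
    apply mulVec_injective_iff_isUnit.mpr hunit
    ext k
    rw [hgram_mulVec]
    simp only [mulVec, dotProduct, ← sum_mul, hrow, sum_const, card_univ, nsmul_eq_mul]
    ring
  have hdouble : ∑ ψ, (Mᵀ *ᵥ fun _ => d) ψ = Fintype.card ι * d ^ 2 := by
    simp only [mulVec, dotProduct, transpose_apply]
    rw [sum_comm]
    simp only [← sum_mul, hrow, sum_const, card_univ, nsmul_eq_mul]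
    ring
  rw [hcol, sum_const, card_univ, nsmul_eq_mul] at hdouble
  have hK : (0 : ℝ) < Fintype.card ι := by exact_mod_cast Fintype.card_pos
  linear_combination mul_left_cancel₀ hK.ne' hdouble

variable {α : Type*} [DecidableEq α] {V : Finset α} {B : α → Finset α} {c d : ℕ}

theorem Finset.design_identity_of_lt (hV : V.Nonempty) (hsub : ∀ k ∈ V, B k ⊆ V)
    (hcard : ∀ k ∈ V, #(B k) = d)
    (hinter : ∀ k₁ ∈ V, ∀ k₂ ∈ V, k₁ ≠ k₂ → #(B k₁ ∩ B k₂) = c) (hcd : c < d) :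
    (c : ℝ) * (#V - 1) = d * (d - 1) := by
  have : Nonempty V := hV.to_subtype
  have hcount : ∀ S ⊆ V, ∑ ψ : V, (if ψ.1 ∈ S then (1 : ℝ) else 0) = #S := fun S hS => by
    rw [sum_coe_sort V (fun ψ => if ψ ∈ S then (1 : ℝ) else 0), sum_boole, filter_mem_eq_inter,
      inter_eq_right.mpr hS]
  let M : Matrix V V ℝ := Matrix.of fun k ψ => if ψ.1 ∈ B k then 1 else 0
  have h := M.design_identity_of_lt (c := c) (d := d) (Nat.cast_nonneg c) (by exact_mod_cast hcd)
    (fun k => by simp only [M, Matrix.of_apply, hcount _ (hsub k k.2), hcard k k.2]) (by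
      ext k k'
      simp only [M, Matrix.mul_apply, Matrix.transpose_apply, Matrix.of_apply, ← ite_and,
        mul_boole, ← mem_inter, Subtype.ext_iff]
      rw [hcount _ (inter_subset_right.trans (hsub k k.2))]
      split_ifs with h
      · rw [h, inter_self, hcard _ k'.2]
      · rw [inter_comm, hinter _ k.2 _ k'.2 h])
  rwa [Fintype.card_coe] at h

theorem Finset.card_eq_of_inter_eq_card (hsub : ∀ k ∈ V, B k ⊆ V) (hcard : ∀ k ∈ V, #(B k) = d)
    (hinter : ∀ k₁ ∈ V, ∀ k₂ ∈ V, k₁ ≠ k₂ → #(B k₁ ∩ B k₂) = d)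
    (hcover : ∀ ψ ∈ V, ∃ k ∈ V, ψ ∈ B k) {k₀ : α} (hk₀ : k₀ ∈ V) : d = #V := by
  have hle (k) (hk : k ∈ V) : B k ⊆ B k₀ := by
    rcases eq_or_ne k k₀ with rfl | hne
    · rfl
    · refine (eq_of_subset_of_card_le inter_subset_left ?_).symm.subset.trans inter_subset_right
      rw [hinter k hk k₀ hk₀ hne, hcard k hk]
  have hfull : B k₀ = V := (hsub k₀ hk₀).antisymm fun ψ hψ => by
    obtain ⟨k, hk, hψk⟩ := hcover ψ hψ
    exact hle k hk hψk
  rw [← hcard k₀ hk₀, hfull]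

/-- For `#V = 1` nothing constrains `c`, so the witness is `1` rather than `c`. -/
theorem Finset.exists_design_intersection_size (hV : V.Nonempty) (hc : 1 ≤ c)
    (hsub : ∀ k ∈ V, B k ⊆ V) (hcard : ∀ k ∈ V, #(B k) = d)
    (hinter : ∀ k₁ ∈ V, ∀ k₂ ∈ V, k₁ ≠ k₂ → #(B k₁ ∩ B k₂) = c)
    (hcover : ∀ ψ ∈ V, ∃ k ∈ V, ψ ∈ B k) :
    ∃ c' : ℕ, 1 ≤ c' ∧ c' ≤ d ∧ (∀ k₁ ∈ V, ∀ k₂ ∈ V, k₁ ≠ k₂ → #(B k₁ ∩ B k₂) = c') ∧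
      (c' : ℝ) * (#V - 1) = d * (d - 1) := by
  obtain ⟨k₀, hk₀⟩ := hV
  rcases (one_le_card.mpr ⟨k₀, hk₀⟩).eq_or_lt with hV1 | hV2
  · obtain ⟨k, hk, hk₀k⟩ := hcover k₀ hk₀
    have hd : d = 1 := by
      have := card_le_card (hsub k hk)
      have := card_pos.mpr ⟨k₀, hk₀k⟩
      rw [hcard k hk] at *
      omega
    refine ⟨1, le_rfl, hd.ge, fun k₁ hk₁ k₂ hk₂ hne => ?_, by rw [← hV1, hd]⟩
    exact absurd (card_le_one.mp hV1.ge k₁ hk₁ k₂ hk₂) hne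
  · obtain ⟨k₁, hk₁, k₂, hk₂, hne⟩ := one_lt_card.mp hV2
    have hcd : c ≤ d := hinter k₁ hk₁ k₂ hk₂ hne ▸ hcard k₁ hk₁ ▸ card_le_card inter_subset_left
    refine ⟨c, hc, hcd, hinter, ?_⟩
    rcases hcd.lt_or_eq with hlt | rfl
    · exact design_identity_of_lt ⟨k₀, hk₀⟩ hsub hcard hinter hlt
    · rw [card_eq_of_inter_eq_card hsub hcard hinter hcover hk₀]

end Design

section Network
variable {K : ℕ} {Ψ : ℕ → Finset ℕ}

theorem genNet_of_le {i : ℕ} (h : i ≤ K) : genNet K Ψ i = ∅ := if_pos h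

theorem genNet_succ_mul_add (g : ℕ) {k : ℕ} (hk : k ∈ Icc 1 K) :
    genNet K Ψ ((g + 1) * K + k) = (Ψ k).image (g * K + ·) := by
  obtain ⟨hk1, hkK⟩ := mem_Icc.mp hk
  have hsplit : (g + 1) * K + k - 1 = (k - 1) + K * (g + 1) := by rw [mul_comm]; omega
  have hmod : ((g + 1) * K + k - 1) % K + 1 = k := by
    rw [hsplit, Nat.add_mul_mod_self_left, Nat.mod_eq_of_lt (by omega)]; omega
  have hdiv : ((g + 1) * K + k - 1) / K - 1 = g := by
    rw [hsplit, Nat.add_mul_div_left _ _ (by omega), Nat.div_eq_of_lt (by omega)]; omega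
  rw [genNet, if_neg (by nlinarith), hmod, hdiv]

theorem mul_add_right_inj_of_mem_Icc {g g' k k' : ℕ} (hk : k ∈ Icc 1 K) (hk' : k' ∈ Icc 1 K)
    (h : g * K + k = g' * K + k') : k = k' := by
  obtain ⟨hk1, hkK⟩ := mem_Icc.mp hk
  obtain ⟨hk'1, hk'K⟩ := mem_Icc.mp hk'
  rcases lt_trichotomy g g' with hlt | rfl | hlt
  · have := Nat.mul_le_mul_right K (Nat.succ_le_of_lt hlt); rw [Nat.succ_mul] at this; omega
  · omega
  · have := Nat.mul_le_mul_right K (Nat.succ_le_of_lt hlt); rw [Nat.succ_mul] at this; omega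

theorem exists_mem_genNet (hK : 1 ≤ K) {i j : ℕ} (hj : j ∈ genNet K Ψ i) :
    ∃ g, ∃ k ∈ Icc 1 K, ∃ ψ ∈ Ψ k, i = (g + 1) * K + k ∧ j = g * K + ψ := by
  have hi : K < i := by
    by_contra! h
    rw [genNet_of_le h] at hj
    exact notMem_empty j hj
  obtain ⟨g, k, hk, rfl⟩ : ∃ g, ∃ k ∈ Icc 1 K, i = (g + 1) * K + k :=
    ⟨(i - 1) / K - 1, (i - 1) % K + 1, mem_Icc.mpr ⟨by omega, Nat.mod_lt _ (by omega)⟩, by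
      have hq : 1 ≤ (i - 1) / K := (Nat.one_le_div_iff (by omega)).mpr (by omega)
      have := Nat.div_add_mod (i - 1) K
      rw [Nat.sub_add_cancel hq, mul_comm]
      omega⟩
  rw [genNet_succ_mul_add g hk, mem_image] at hj
  obtain ⟨ψ, hψ, rfl⟩ := hj
  exact ⟨g, k, hk, ψ, hψ, rfl, rfl⟩

theorem lt_of_mem_genNet (hK : 1 ≤ K) (hsub : ∀ k ∈ Icc 1 K, Ψ k ⊆ Icc 1 K) {i j : ℕ}
    (hj : j ∈ genNet K Ψ i) : j < i := by
  obtain ⟨g, k, hk, ψ, hψ, rfl, rfl⟩ := exists_mem_genNet hK hj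
  have := (mem_Icc.mp (hsub k hk hψ)).2
  have := (mem_Icc.mp hk).1
  rw [add_mul, one_mul]
  omega

theorem exists_mem_of_hasPath (hK : 1 ≤ K) (hsub : ∀ k ∈ Icc 1 K, Ψ k ⊆ Icc 1 K) {a t ψ : ℕ}
    (hψ : ψ ∈ Icc 1 K) (hpath : HasPath (genNet K Ψ) a (t * K + ψ)) (hne : a ≠ t * K + ψ) :
    ∃ k ∈ Icc 1 K, ψ ∈ Ψ k := by
  obtain ⟨L, f, hf0, hfL, hstep⟩ := hpath
  obtain ⟨L, rfl⟩ : ∃ L', L = L' + 1 := Nat.exists_eq_add_one.mpr <|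
    Nat.pos_of_ne_zero fun h => hne (by rw [← hf0, ← hfL, h])
  have hlast := hstep L L.lt_add_one
  rw [hfL] at hlast
  obtain ⟨g, k, hk, ψ', hψ', -, heq⟩ := exists_mem_genNet hK hlast
  rw [mul_add_right_inj_of_mem_Icc hψ (hsub k hk hψ') heq]
  exact ⟨k, hk, hψ'⟩

end Network

section Weights
variable (Net : ℕ → Finset ℕ) (β : ℝ)

/-- The restriction to `j < i` only makes the recursion well founded; on the generations network
it is vacuous (`lt_of_mem_genNet`). -/
noncomputable def signalWeights (i : ℕ) : ℕ → ℝ := fun m =>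
  (if m = i then 1 else 0) + β * ∑ j ∈ ((Net i).filter (· < i)).attach, signalWeights j.1 m
termination_by i
decreasing_by exact (mem_filter.mp j.2).2

variable {Net β}

theorem signalWeights_apply (i m : ℕ) : signalWeights Net β i m =
    (if m = i then 1 else 0) + β * ∑ j ∈ (Net i).filter (· < i), signalWeights Net β j m := by
  rw [signalWeights, sum_attach _ (signalWeights Net β · m)]

theorem signalWeights_eq_zero_of_lt {i m : ℕ} (h : i < m) : signalWeights Net β i m = 0 := by
  induction i using Nat.strong_induction_on with
  | _ i ih =>
    rw [signalWeights_apply, if_neg h.ne', sum_eq_zero fun j hj => ih j (mem_filter.mp hj).2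
      ((mem_filter.mp hj).2.trans h), mul_zero, add_zero]

theorem signalWeights_self (i : ℕ) : signalWeights Net β i i = 1 := by
  rw [signalWeights_apply, if_pos rfl, sum_eq_zero fun j hj =>
    signalWeights_eq_zero_of_lt (mem_filter.mp hj).2, mul_zero, add_zero]

theorem signalWeights_nonneg (hβ : 0 ≤ β) (i m : ℕ) : 0 ≤ signalWeights Net β i m := by
  induction i using Nat.strong_induction_on with
  | _ i ih =>
    rw [signalWeights_apply]
    exact add_nonneg (by positivity) <|
      mul_nonneg hβ <| sum_nonneg fun j hj => ih j (mem_filter.mp hj).2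

theorem signalWeights_eq {i : ℕ} (hNet : ∀ j ∈ Net i, j < i) (m : ℕ) : signalWeights Net β i m =
    (if m = i then 1 else 0) + β * ∑ j ∈ Net i, signalWeights Net β j m := by
  rw [signalWeights_apply, filter_true_of_mem hNet]

theorem one_le_sum_range_signalWeights (hβ : 0 ≤ β) (i : ℕ) :
    1 ≤ ∑ m ∈ range (i + 1), signalWeights Net β i m :=
  signalWeights_self (Net := Net) (β := β) i ▸
    single_le_sum (fun m _ => signalWeights_nonneg hβ i m) (self_mem_range_succ i)

theorem one_le_sum_range_signalWeights_sq (i : ℕ) :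
    1 ≤ ∑ m ∈ range (i + 1), signalWeights Net β i m ^ 2 := by
  calc (1 : ℝ) = signalWeights Net β i i ^ 2 := by rw [signalWeights_self, one_pow]
    _ ≤ _ := single_le_sum (fun m _ => sq_nonneg (signalWeights Net β i m)) (self_mem_range_succ i)

end Weights

theorem mul_eq_add_sum_div_mul {Net : ℕ → Finset ℕ} {β : ℝ} {w : ℕ → ℕ → ℝ}
    (hw : ∀ i m, w i m = (if m = i then 1 else 0) + β * ∑ j ∈ Net i, w j m)
    {α : ℕ → ℝ} (hα : ∀ i, α i ≠ 0) (i m : ℕ) :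
    α i * w i m = α i * (if m = i then 1 else 0) + ∑ j ∈ Net i, α i * β / α j * (α j * w j m) := by
  have (j : ℕ) : α i * β / α j * (α j * w j m) = α i * β * w j m := by field_simp [hα j]
  rw [hw i m]
  simp only [this, ← mul_sum]
  ring

section CountingScale
variable {ι : Type*} (s : Finset ι) (v : ι → ℝ)

noncomputable def countingScale : ℝ := (∑ x ∈ s, v x) / ∑ x ∈ s, v x ^ 2

theorem sum_countingScale_mul : ∑ x ∈ s, countingScale s v * v x =
    (∑ x ∈ s, v x) ^ 2 / ∑ x ∈ s, v x ^ 2 := by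
  rw [← mul_sum, countingScale]
  ring

theorem sum_countingScale_mul_sq (h : ∑ x ∈ s, v x ^ 2 ≠ 0) :
    ∑ x ∈ s, (countingScale s v * v x) ^ 2 = ∑ x ∈ s, countingScale s v * v x := by
  simp only [mul_pow, ← mul_sum, countingScale]
  field_simp

end CountingScale

section IndicatorSums
variable {N N₀ i j : ℕ} {u v : ℕ → ℝ}

theorem sum_range_indicator_add (hi : N₀ ≤ i) (hiN : i < N) (hu : ∀ m ≥ N₀, u m = 0) :
    ∑ m ∈ range N, ((if m = i then 1 else 0) + u m) = 1 + ∑ m ∈ range N₀, u m := by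
  rw [sum_add_distrib, sum_ite_eq', if_pos (mem_range.mpr hiN),
    eventually_constant_sum hu (hi.trans hiN.le)]

theorem sum_range_indicator_add_mul (hi : N₀ ≤ i) (hiN : i < N) (hj : N₀ ≤ j)
    (hu : ∀ m ≥ N₀, u m = 0) (hv : ∀ m ≥ N₀, v m = 0) :
    ∑ m ∈ range N, ((if m = i then 1 else 0) + u m) * ((if m = j then 1 else 0) + v m) =
      (if i = j then 1 else 0) + ∑ m ∈ range N₀, u m * v m := by
  have hsingle (f : ℕ → ℝ) : ∑ m ∈ range N, (if m = i then 1 else 0) * f m = f i := by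
    simp only [ite_mul, one_mul, zero_mul, sum_ite_eq', mem_range, if_pos hiN]
  have huj : ∑ m ∈ range N, u m * (if m = j then 1 else 0) = 0 := by
    simp only [mul_boole, sum_ite_eq', hu j hj, ite_self]
  rw [sum_congr rfl fun m _ => add_mul _ _ _, sum_add_distrib, hsingle, hv i hi, add_zero,
    sum_congr rfl fun m _ => mul_add _ _ _, sum_add_distrib, huj, zero_add,
    eventually_constant_sum (u := fun m => u m * v m) (fun m hm => by rw [hu m hm, zero_mul])
      (hi.trans hiN.le)]

theorem Finset.sum_sum_ite_eq_add {ι : Type*} [DecidableEq ι] (s t : Finset ι) (a b : ℝ) :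
    ∑ x ∈ s, ∑ y ∈ t, ((if x = y then a else 0) + b) = #(s ∩ t) * a + #s * #t * b := by
  simp only [sum_add_distrib, sum_ite_eq, sum_const, nsmul_eq_mul, ← sum_filter, filter_mem_eq_inter]
  ring

end IndicatorSums

/-- `gramDiag ρ g • 1 + gramOffDiag ρ γ g • J` is the Gram matrix of generation `g + 1`
(`sum_range_signalWeights_genNet_mul`). -/
def gramDiag (ρ : ℝ) : ℕ → ℝ
  | 0 => 1
  | g + 1 => 1 + ρ * gramDiag ρ g

def gramOffDiag (ρ γ : ℝ) : ℕ → ℝ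
  | 0 => 0
  | g + 1 => gramOffDiag ρ γ g + γ * gramDiag ρ g

theorem gramDiag_le {ρ : ℝ} (h0 : 0 ≤ ρ) (h1 : ρ < 1) (g : ℕ) : gramDiag ρ g ≤ (1 - ρ)⁻¹ := by
  have hpos : 0 < 1 - ρ := by linarith
  have hinv : 1 ≤ (1 - ρ)⁻¹ := one_le_inv₀ hpos |>.mpr (by linarith)
  induction g with
  | zero => exact hinv
  | succ g ih =>
    calc 1 + ρ * gramDiag ρ g ≤ 1 + ρ * (1 - ρ)⁻¹ := by gcongr
      _ = (1 - ρ)⁻¹ := by field_simp [hpos.ne']; ring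

theorem gramOffDiag_le {ρ γ : ℝ} (h0 : 0 ≤ ρ) (h1 : ρ < 1) (hγ : 0 ≤ γ) (g : ℕ) :
    gramOffDiag ρ γ g ≤ g * (γ * (1 - ρ)⁻¹) := by
  induction g with
  | zero => simp [gramOffDiag]
  | succ g ih =>
    have := mul_le_mul_of_nonneg_left (gramDiag_le h0 h1 g) hγ
    push_cast [gramOffDiag]
    linarith

theorem exists_mul_lt_sq_div {K K₀ C : ℝ} (hK₀ : 0 ≤ K₀) (hK : K₀ < K) :
    ∃ G : ℕ, ∀ g : ℕ, G ≤ g → ∀ S : ℝ, 0 < S → S ≤ C + g / K → g * K₀ < (g + 1) ^ 2 / S := by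
  obtain ⟨G, hG⟩ := exists_nat_ge (K₀ * C * K / (K - K₀))
  refine ⟨G, fun g hg S hS hSle => ?_⟩
  have hKpos : 0 < K := hK₀.trans_lt hK
  have hgG : K₀ * C * K ≤ g * (K - K₀) := by
    rw [div_le_iff₀ (by linarith)] at hG
    nlinarith [(Nat.cast_le (α := ℝ)).mpr hg]
  have hg0 : (0 : ℝ) ≤ g := g.cast_nonneg
  rw [lt_div_iff₀ hS]
  calc g * K₀ * S ≤ g * K₀ * (C + g / K) := by gcongr
    _ = (g * K₀ * C * K + g ^ 2 * K₀) / K := by field_simp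
    _ ≤ (g * (g * (K - K₀)) + g ^ 2 * K₀) / K := by
      gcongr (?_ + _) / _
      nlinarith [mul_le_mul_of_nonneg_left hgG hg0]
    _ = g ^ 2 := by field_simp; ring
    _ < (g + 1) ^ 2 := by nlinarith

theorem gramDiag_add_gramOffDiag_le {K c d : ℕ} (hK : 1 ≤ K) (hc : 1 ≤ c) (hcd : c ≤ d)
    (hdesign : (c : ℝ) * (K - 1) = d * (d - 1)) (g : ℕ) :
    gramDiag ((d - c) / d ^ 2) g + gramOffDiag ((d - c) / d ^ 2) (c / d ^ 2) g ≤
      (1 - ((d : ℝ) - c) / d ^ 2)⁻¹ + g / K := by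
  have hcR : (1 : ℝ) ≤ c := by exact_mod_cast hc
  have hcdR : (c : ℝ) ≤ d := by exact_mod_cast hcd
  have hKR : (1 : ℝ) ≤ K := by exact_mod_cast hK
  have hd : (0 : ℝ) < d := by linarith
  set ρ : ℝ := (d - c) / d ^ 2 with hρ
  have h1ρ : 1 - ρ = c * K / d ^ 2 := by
    rw [hρ]
    field_simp
    linear_combination -hdesign
  have hρ0 : 0 ≤ ρ := div_nonneg (by linarith) (by positivity)
  have hρ1 : ρ < 1 := by
    have : (0 : ℝ) < c * K / d ^ 2 := by positivity
    linarith
  have hγ : (c : ℝ) / d ^ 2 * (1 - ρ)⁻¹ = 1 / K := by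
    rw [h1ρ]
    field_simp
  have := gramOffDiag_le hρ0 hρ1 (by positivity) (γ := c / d ^ 2) g
  rw [hγ, mul_one_div] at this
  linarith [gramDiag_le hρ0 hρ1 g]

-- The agents `g * K + k`, `k ∈ Icc 1 K`, form generation `g + 1`.
section Generations
variable {K c d : ℕ} {Ψ : ℕ → Finset ℕ}

theorem signalWeights_genNet_of_le {β : ℝ} {i : ℕ} (hi : i ≤ K) (m : ℕ) :
    signalWeights (genNet K Ψ) β i m = if m = i then 1 else 0 := by
  rw [signalWeights_apply, genNet_of_le hi, filter_empty, sum_empty, mul_zero, add_zero]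

theorem signalWeights_genNet_succ_mul_add (hK : 1 ≤ K) (hsub : ∀ k ∈ Icc 1 K, Ψ k ⊆ Icc 1 K)
    {β : ℝ} (g : ℕ) {k : ℕ} (hk : k ∈ Icc 1 K) (m : ℕ) :
    signalWeights (genNet K Ψ) β ((g + 1) * K + k) m = (if m = (g + 1) * K + k then 1 else 0) +
      β * ∑ ψ ∈ Ψ k, signalWeights (genNet K Ψ) β (g * K + ψ) m := by
  rw [signalWeights_eq (fun j hj => lt_of_mem_genNet hK hsub hj), genNet_succ_mul_add g hk,
    sum_image fun _ _ _ _ h => Nat.add_left_cancel h]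

theorem mul_add_lt_of_mem (hsub : ∀ k ∈ Icc 1 K, Ψ k ⊆ Icc 1 K) (g : ℕ) {k ψ : ℕ}
    (hk : k ∈ Icc 1 K) (hψ : ψ ∈ Ψ k) : g * K + ψ < (g + 1) * K + 1 := by
  have := (mem_Icc.mp (hsub k hk hψ)).2
  rw [add_mul, one_mul]
  omega

theorem sum_signalWeights_genNet_eq_zero (hsub : ∀ k ∈ Icc 1 K, Ψ k ⊆ Icc 1 K) {β : ℝ} (g : ℕ)
    {k : ℕ} (hk : k ∈ Icc 1 K) {m : ℕ} (hm : (g + 1) * K + 1 ≤ m) :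
    β * ∑ ψ ∈ Ψ k, signalWeights (genNet K Ψ) β (g * K + ψ) m = 0 :=
  mul_eq_zero_of_right _ <| sum_eq_zero fun _ hψ =>
    signalWeights_eq_zero_of_lt ((mul_add_lt_of_mem hsub g hk hψ).trans_le hm)

theorem sum_range_signalWeights_genNet (hK : 1 ≤ K) (hsub : ∀ k ∈ Icc 1 K, Ψ k ⊆ Icc 1 K)
    (hcard : ∀ k ∈ Icc 1 K, #(Ψ k) = d) (hd : d ≠ 0) (g : ℕ) {k N : ℕ} (hk : k ∈ Icc 1 K)
    (hN : g * K + k < N) :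
    ∑ m ∈ range N, signalWeights (genNet K Ψ) (d : ℝ)⁻¹ (g * K + k) m = g + 1 := by
  induction g generalizing k N with
  | zero =>
    rw [zero_mul, zero_add] at hN ⊢
    simp only [signalWeights_genNet_of_le (mem_Icc.mp hk).2, sum_ite_eq', mem_range, if_pos hN,
      Nat.cast_zero, zero_add]
  | succ g ih =>
    have hk' := mem_Icc.mp hk
    simp only [signalWeights_genNet_succ_mul_add hK hsub g hk]
    rw [sum_range_indicator_add (by omega) hN
      (fun m hm => sum_signalWeights_genNet_eq_zero hsub g hk hm)]
    rw [← mul_sum, sum_comm, sum_congr rfl fun ψ hψ =>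
      ih (hsub k hk hψ) (mul_add_lt_of_mem hsub g hk hψ), sum_const, hcard k hk, nsmul_eq_mul]
    field_simp
    push_cast
    ring

theorem sum_range_signalWeights_genNet_mul (hK : 1 ≤ K) (hsub : ∀ k ∈ Icc 1 K, Ψ k ⊆ Icc 1 K)
    (hcard : ∀ k ∈ Icc 1 K, #(Ψ k) = d)
    (hinter : ∀ k₁ ∈ Icc 1 K, ∀ k₂ ∈ Icc 1 K, k₁ ≠ k₂ → #(Ψ k₁ ∩ Ψ k₂) = c) (hd : d ≠ 0)
    (g : ℕ) {k k' N : ℕ} (hk : k ∈ Icc 1 K) (hk' : k' ∈ Icc 1 K) (hN : g * K + k < N) :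
    ∑ m ∈ range N, signalWeights (genNet K Ψ) (d : ℝ)⁻¹ (g * K + k) m *
        signalWeights (genNet K Ψ) (d : ℝ)⁻¹ (g * K + k') m =
      (if k = k' then gramDiag ((d - c) / d ^ 2) g else 0) +
        gramOffDiag ((d - c) / d ^ 2) (c / d ^ 2) g := by
  induction g generalizing k k' N with
  | zero =>
    simp only [zero_mul, zero_add] at hN ⊢
    simp only [signalWeights_genNet_of_le (mem_Icc.mp hk).2,
      signalWeights_genNet_of_le (mem_Icc.mp hk').2, ite_mul, one_mul, zero_mul, sum_ite_eq',
      mem_range, if_pos hN, gramDiag, gramOffDiag, add_zero]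
  | succ g ih =>
    have hk1 := mem_Icc.mp hk
    have hk1' := mem_Icc.mp hk'
    simp only [signalWeights_genNet_succ_mul_add hK hsub g hk,
      signalWeights_genNet_succ_mul_add hK hsub g hk']
    rw [sum_range_indicator_add_mul (by omega) hN (by omega)
      (fun m hm => sum_signalWeights_genNet_eq_zero hsub g hk hm)
      (fun m hm => sum_signalWeights_genNet_eq_zero hsub g hk' hm)]
    simp_rw [mul_mul_mul_comm _ (∑ ψ ∈ Ψ k, _), sum_mul_sum]
    rw [← mul_sum, sum_comm, sum_congr rfl fun ψ _ => sum_comm]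
    rw [sum_congr rfl fun ψ hψ => sum_congr rfl fun ψ' hψ' =>
        ih (hsub k hk hψ) (hsub k' hk' hψ') (mul_add_lt_of_mem hsub g hk hψ),
      sum_sum_ite_eq_add, hcard k hk, hcard k' hk']
    have hdR : (d : ℝ) ≠ 0 := Nat.cast_ne_zero.mpr hd
    simp only [gramDiag, gramOffDiag, Nat.add_left_cancel_iff]
    split_ifs with h
    · rw [h, inter_self, hcard k' hk']
      field_simp
      ring
    · rw [hinter k hk k' hk' h]
      field_simp
      ring

theorem sum_range_signalWeights_genNet_sq (hK : 1 ≤ K) (hsub : ∀ k ∈ Icc 1 K, Ψ k ⊆ Icc 1 K)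
    (hcard : ∀ k ∈ Icc 1 K, #(Ψ k) = d)
    (hinter : ∀ k₁ ∈ Icc 1 K, ∀ k₂ ∈ Icc 1 K, k₁ ≠ k₂ → #(Ψ k₁ ∩ Ψ k₂) = c) (hd : d ≠ 0)
    (g : ℕ) {k N : ℕ} (hk : k ∈ Icc 1 K) (hN : g * K + k < N) :
    ∑ m ∈ range N, signalWeights (genNet K Ψ) (d : ℝ)⁻¹ (g * K + k) m ^ 2 =
      gramDiag ((d - c) / d ^ 2) g + gramOffDiag ((d - c) / d ^ 2) (c / d ^ 2) g := by
  rw [sum_congr rfl fun m _ => sq _,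
    sum_range_signalWeights_genNet_mul hK hsub hcard hinter hd g hk hk hN, if_pos rfl]

end Generations

/-- Suppose the observation sets of a generations network are
strongly connected and symmetric with parameters `(d, c)`, `c ≥ 1`. Then there is a
log-linear (non-equilibrium) strategy profile, i.e. coefficients `b_{i,0}` and
`(b_{i,j})_{j∈N(i)}` defining weight vectors `W′_i = b_{i,0}·e_i + Σ_{j∈N(i)} b_{i,j}·W′_j`,
whose rows all satisfy the signal-counting identity, and such that for every
`K₀ < K` there is a `T` with: for all `t ≥ T` and `1 ≤ k ≤ K`, agent `(t−1)K+k`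
aggregates more than `(t−1)K₀` signals. -/
theorem planner_log_linear_profile (K d c : ℕ) (hK : 1 ≤ K) (hc : 1 ≤ c)
    (Ψ : ℕ → Finset ℕ)
    (hsub : ∀ k ∈ Finset.Icc 1 K, Ψ k ⊆ Finset.Icc 1 K)
    (hcard : ∀ k ∈ Finset.Icc 1 K, (Ψ k).card = d)
    (hinter : ∀ k₁ ∈ Finset.Icc 1 K, ∀ k₂ ∈ Finset.Icc 1 K, k₁ ≠ k₂ →
      ((Ψ k₁) ∩ (Ψ k₂)).card = c)
    (hconn : ∀ k₁ k₂ : ℕ, 1 ≤ k₁ → k₁ ≤ k₂ → k₂ ≤ K →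
      ∃ t₁ t₂ : ℕ, t₁ < t₂ ∧ HasPath (genNet K Ψ) (t₂ * K + k₂) (t₁ * K + k₁)) :
    ∃ (W' : ℕ → ℕ → ℝ) (b0 : ℕ → ℝ) (b : ℕ → ℕ → ℝ),
      (∀ i m : ℕ, W' i m
          = b0 i * (if m = i then 1 else 0)
            + ∑ j ∈ genNet K Ψ i, b i j * W' j m) ∧
      (∀ i : ℕ, 1 ≤ i →
        (∑ j ∈ Finset.range (i + 1), W' i j)
          = ∑ j ∈ Finset.range (i + 1), (W' i j) ^ 2) ∧
      (∀ K₀ : ℝ, 0 < K₀ → K₀ < K →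
        ∃ T : ℕ, ∀ t : ℕ, T ≤ t → ∀ k : ℕ, 1 ≤ k → k ≤ K →
          ((t : ℝ) - 1) * K₀
            < ∑ j ∈ Finset.range ((t - 1) * K + k + 1), W' ((t - 1) * K + k) j) := by
  have hcover (ψ) (hψ : ψ ∈ Icc 1 K) : ∃ k ∈ Icc 1 K, ψ ∈ Ψ k := by
    obtain ⟨t₁, t₂, ht, hpath⟩ := hconn ψ ψ (mem_Icc.mp hψ).1 le_rfl (mem_Icc.mp hψ).2
    exact exists_mem_of_hasPath hK hsub hψ hpath (by nlinarith)
  obtain ⟨c', hc', hc'd, hinter', hdesign⟩ := exists_design_intersection_size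
    ⟨1, mem_Icc.mpr ⟨le_rfl, hK⟩⟩ hc hsub hcard hinter hcover
  rw [Nat.card_Icc, Nat.add_sub_cancel] at hdesign
  set w := signalWeights (genNet K Ψ) (d : ℝ)⁻¹
  set α : ℕ → ℝ := fun i => countingScale (range (i + 1)) (w i)
  have hsq (i) : ∑ m ∈ range (i + 1), w i m ^ 2 ≠ 0 :=
    (one_pos.trans_le (one_le_sum_range_signalWeights_sq i)).ne'
  have hα (i) : α i ≠ 0 := div_ne_zero
    (one_pos.trans_le (one_le_sum_range_signalWeights (by positivity) i)).ne' (hsq i)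
  refine ⟨fun i m => α i * w i m, α, fun i j => α i * (d : ℝ)⁻¹ / α j,
    mul_eq_add_sum_div_mul (fun i => signalWeights_eq fun j hj => lt_of_mem_genNet hK hsub hj) hα,
    fun i _ => (sum_countingScale_mul_sq _ _ (hsq i)).symm, fun K₀ hK₀ hK₀K => ?_⟩
  obtain ⟨G, hG⟩ := exists_mul_lt_sq_div hK₀.le hK₀K
    (C := (1 - ((d : ℝ) - c') / d ^ 2)⁻¹)
  refine ⟨G + 1, fun t ht k hk1 hkK => ?_⟩
  obtain ⟨g, rfl⟩ : ∃ g, t = g + 1 := ⟨t - 1, by omega⟩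
  have hk : k ∈ Icc 1 K := mem_Icc.mpr ⟨hk1, hkK⟩
  have hd : d ≠ 0 := by omega
  have hS2 := sum_range_signalWeights_genNet_sq hK hsub hcard hinter' hd g hk (lt_add_one _)
  simp only [Nat.add_sub_cancel, Nat.cast_add, Nat.cast_one, add_sub_cancel_right]
  rw [sum_countingScale_mul, sum_range_signalWeights_genNet hK hsub hcard hd g hk (lt_add_one _),
    hS2]
  exact hG g (by omega) _ (hS2 ▸ one_pos.trans_le (one_le_sum_range_signalWeights_sq _))
    (gramDiag_add_gramOffDiag_le hK hc' hc'd hdesign g)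
end

section
/- Consider the mentorship-augmented maximal generations network with generation size K ≥ 1: each agent i = (t−1)K+k in generation t ≥ 2 observes the log-actions of all K agents of generation t−1 and additionally the log-signal of one designated agent m(i) of generation t−1; the equilibrium weight vectors are defined recursively by W_i := e_i + proj_{V_i}(𝟙), where V_i ⊆ ℝ^{i−1} is the linear span of the observed vectors (the restrictions to coordinates 1,…,i−1 of W_j for all j in generation t−1, together with the standard basis vector e_{m(i)}), 𝟙 ∈ ℝ^{i−1} is the all-ones vector, and proj_{V_i} is orthogonal projection onto V_i (for agents in generation 1, W_i := e_i). Then for every agent i in generation t, W_i = e_i + Σ_{j=1}^{(t−1)K} e_j; hence r_i := Σ_j W_i(j) = (t−1)K + 1 > i − K for every agent i, and lim_{i→∞} r_i/i = 1, i.e. aggregative efficiency is 1. -/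
/-!
Induction on the generation. If every agent `j` of generation `t − 1` has
`W_j = e_j + 𝟙_{[1,(t−2)K]}`, the sum of these `K` vectors is
`𝟙_{((t−2)K,(t−1)K]} + K·𝟙_{[1,(t−2)K]}`, and the mentor's signal splits off
`W_{m(i)} − e_{m(i)} = 𝟙_{[1,(t−2)K]}`; a combination of the two is the prefix of ones
`𝟙_{[1,(t−1)K]}`, which therefore lies in `V_i`. Every observed vector vanishes beyond
coordinate `(t−1)K`, where `𝟙 − 𝟙_{[1,(t−1)K]}` lives, so this prefix is the projection of `𝟙`.
-/

open Finset Filter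

/-- Restriction of a weight vector to coordinates `1,…,i−1`, as an element of
Euclidean space. -/
noncomputable def restr (i : ℕ) (v : ℕ → ℝ) : EuclideanSpace ℝ (Fin (i - 1)) :=
  WithLp.toLp 2 (fun m => v (m.1 + 1))

/-- The span `V_i` of the observed vectors of an agent `i` in generation `t` of the
mentorship-augmented maximal generations network: the restrictions of the weight
vectors of all agents of generation `t−1`, together with the standard basis vector
of the mentor's coordinate. -/
noncomputable def mentorSpan (K : ℕ) (W : ℕ → ℕ → ℝ) (mentor : ℕ → ℕ) (t i : ℕ) :
    Submodule ℝ (EuclideanSpace ℝ (Fin (i - 1))) :=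
  Submodule.span ℝ
    (((fun j => restr i (W j)) '' {j | (t - 2) * K + 1 ≤ j ∧ j ≤ (t - 1) * K})
      ∪ {restr i (fun m => if m = mentor i then 1 else 0)})

open scoped InnerProductSpace Topology

theorem Submodule.starProjection_span_eq_of_mem_of_inner_eq_zero {𝕜 E : Type*} [RCLike 𝕜]
    [NormedAddCommGroup E] [InnerProductSpace 𝕜 E] {s : Set E} [(span 𝕜 s).HasOrthogonalProjection]
    {x u : E} (hu : u ∈ span 𝕜 s) (hx : ∀ v ∈ s, ⟪x - u, v⟫_𝕜 = 0) :
    (span 𝕜 s).starProjection x = u :=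
  eq_starProjection_of_mem_orthogonal hu <|
    isOrtho_iff_le.1 (isOrtho_span.2 fun _ hw v hv => by
      rw [Set.mem_singleton_iff.1 hw]; exact hx v hv) (mem_span_singleton_self _)

noncomputable def restrₗ (i : ℕ) : (ℕ → ℝ) →ₗ[ℝ] EuclideanSpace ℝ (Fin (i - 1)) where
  toFun := restr i
  map_add' _ _ := rfl
  map_smul' _ _ := rfl

theorem inner_restr_eq_zero {i N : ℕ} {f g : ℕ → ℝ} (hf : ∀ m, 1 ≤ m → m ≤ N → f m = 0)
    (hg : ∀ m, N < m → g m = 0) : ⟪restr i f, restr i g⟫_ℝ = 0 := by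
  refine Finset.sum_eq_zero fun m _ => ?_
  rcases le_or_gt (m.1 + 1) N with h | h
  · simp [restr, hf _ (by omega) h]
  · simp [restr, hg _ h]

def onesUpTo (n : ℕ) : ℕ → ℝ := fun m => if 1 ≤ m ∧ m ≤ n then 1 else 0

def fullInfoWeight (n i : ℕ) : ℕ → ℝ := fun m => (if m = i then 1 else 0) + onesUpTo n m

theorem sum_Icc_fullInfoWeight (a K : ℕ) :
    ∑ j ∈ Icc (a + 1) (a + K), fullInfoWeight a j =
      onesUpTo (a + K) + ((K : ℝ) - 1) • onesUpTo a := by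
  ext m
  simp only [Finset.sum_apply, fullInfoWeight, onesUpTo, sum_add_distrib, Finset.sum_ite_eq,
    sum_const, Nat.card_Icc, Nat.add_sub_add_right, Nat.add_sub_cancel_left, Pi.add_apply,
    Pi.smul_apply, smul_eq_mul, nsmul_eq_mul, mem_Icc]
  split_ifs <;> first | ring1 | (exfalso; omega)

theorem sum_range_fullInfoWeight {n i : ℕ} (h : n < i) :
    ∑ j ∈ range (i + 1), fullInfoWeight n i j = n + 1 := by
  have hfilter : (range (i + 1)).filter (fun j => 1 ≤ j ∧ j ≤ n) = Icc 1 n := by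
    ext j; simp only [mem_filter, mem_range, mem_Icc]; omega
  simp [fullInfoWeight, onesUpTo, sum_add_distrib, Finset.sum_boole, hfilter, add_comm]

theorem fullInfoWeight_sub_single (n i : ℕ) :
    fullInfoWeight n i - (fun m => if m = i then 1 else 0) = onesUpTo n :=
  add_sub_cancel_left _ _

theorem eq_fullInfoWeight_of_restr_eq {n i : ℕ} {w : ℕ → ℝ} (hn : n < i)
    (hrestr : restr i w = restr i (onesUpTo n)) (hi : w i = 1) (h0 : w 0 = 0)
    (habove : ∀ m, i < m → w m = 0) : w = fullInfoWeight n i := by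
  ext m
  rcases Nat.lt_trichotomy m i with hlt | rfl | hgt
  · rcases m with _ | m
    · simp [h0, fullInfoWeight, onesUpTo, hlt.ne]
    · have hm := congrArg (fun v : EuclideanSpace ℝ (Fin (i - 1)) => v ⟨m, by omega⟩) hrestr
      simp only [restr] at hm
      rw [hm, fullInfoWeight, if_neg (by omega), zero_add]
  · rw [hi, fullInfoWeight, onesUpTo, if_pos rfl, if_neg (by omega), add_zero]
  · rw [habove m hgt, fullInfoWeight, onesUpTo, if_neg (by omega), if_neg (by omega), add_zero]

section Mentorship

variable {K : ℕ} {W : ℕ → ℕ → ℝ} {mentor : ℕ → ℕ}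

theorem orthogonalProjectionOnto_mentorSpan {t i : ℕ} (ht : 2 ≤ t)
    (hprev : ∀ j, (t - 2) * K + 1 ≤ j → j ≤ (t - 1) * K → W j = fullInfoWeight ((t - 2) * K) j)
    (hm : (t - 2) * K + 1 ≤ mentor i ∧ mentor i ≤ (t - 1) * K) :
    ((mentorSpan K W mentor t i).orthogonalProjectionOnto (WithLp.toLp 2 fun _ => 1) :
        EuclideanSpace ℝ (Fin (i - 1))) = restr i (onesUpTo ((t - 1) * K)) := by
  have hgen : (t - 1) * K = (t - 2) * K + K := by
    rw [← add_one_mul]; congr 1; omega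
  rw [mentorSpan]
  rw [hgen] at hprev hm ⊢
  set a := (t - 2) * K
  set e : ℕ → ℝ := fun m => if m = mentor i then 1 else 0
  have hdecomp : onesUpTo (a + K) =
      ∑ j ∈ Icc (a + 1) (a + K), W j - ((K : ℝ) - 1) • (W (mentor i) - e) := by
    rw [sum_congr rfl fun j hj => hprev j (mem_Icc.1 hj).1 (mem_Icc.1 hj).2, sum_Icc_fullInfoWeight,
      hprev _ hm.1 hm.2, fullInfoWeight_sub_single, add_sub_cancel_right]
  rw [Submodule.coe_orthogonalProjectionOnto_apply]
  apply Submodule.starProjection_span_eq_of_mem_of_inner_eq_zero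
  · have hrestr := congrArg (restrₗ i) hdecomp
    rw [map_sub, map_sum, map_smul, map_sub] at hrestr
    change restr i _ = _ at hrestr
    rw [hrestr]
    refine Submodule.sub_mem _ (Submodule.sum_mem _ fun j hj => ?_) (Submodule.smul_mem _ _ ?_)
    · exact Submodule.subset_span (Or.inl ⟨j, mem_Icc.1 hj, rfl⟩)
    · exact Submodule.sub_mem _ (Submodule.subset_span (Or.inl ⟨mentor i, hm, rfl⟩))
        (Submodule.subset_span (Or.inr rfl))
  · have hone : (WithLp.toLp 2 fun _ => 1 : EuclideanSpace ℝ (Fin (i - 1))) -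
        restr i (onesUpTo (a + K)) = restr i (1 - onesUpTo (a + K)) := rfl
    rintro v (⟨j, hj, rfl⟩ | rfl)
    all_goals
      rw [hone]
      refine inner_restr_eq_zero (N := a + K) (fun m hm1 hm2 => ?_) (fun m hlt => ?_)
    · simp [onesUpTo, hm1, hm2]
    · have hj' : a + 1 ≤ j ∧ j ≤ a + K := hj
      simp only [hprev j hj'.1 hj'.2, fullInfoWeight, onesUpTo]
      rw [if_neg (by omega), if_neg (by omega), add_zero]
    · simp [onesUpTo, hm1, hm2]
    · exact if_neg (by omega)

theorem weight_eq_fullInfoWeight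
    (hmentor : ∀ t k : ℕ, 2 ≤ t → 1 ≤ k → k ≤ K →
      (t - 2) * K + 1 ≤ mentor ((t - 1) * K + k) ∧ mentor ((t - 1) * K + k) ≤ (t - 1) * K)
    (hWgen1 : ∀ i : ℕ, 1 ≤ i → i ≤ K → ∀ m : ℕ, W i m = if m = i then 1 else 0)
    (hWrec : ∀ t k : ℕ, 2 ≤ t → 1 ≤ k → k ≤ K →
      (∀ m : Fin ((t - 1) * K + k - 1),
        W ((t - 1) * K + k) (m.1 + 1)
          = ((mentorSpan K W mentor t ((t - 1) * K + k)).orthogonalProjectionOnto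
              (WithLp.toLp 2 fun _ => 1) : EuclideanSpace ℝ (Fin ((t - 1) * K + k - 1))) m) ∧
      W ((t - 1) * K + k) ((t - 1) * K + k) = 1 ∧
      W ((t - 1) * K + k) 0 = 0 ∧
      (∀ m : ℕ, (t - 1) * K + k < m → W ((t - 1) * K + k) m = 0))
    (t : ℕ) (ht : 1 ≤ t) : ∀ k, 1 ≤ k → k ≤ K →
      W ((t - 1) * K + k) = fullInfoWeight ((t - 1) * K) ((t - 1) * K + k) := by
  induction t, ht using Nat.le_induction with
  | base =>
    intro k hk hkK
    ext m
    simp [hWgen1 k hk hkK m, fullInfoWeight, onesUpTo]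
    omega
  | succ t ht ih =>
    intro k hk hkK
    obtain ⟨hproj, hdiag, hzero, habove⟩ := hWrec (t + 1) k (by omega) hk hkK
    have hprev : ∀ j, (t + 1 - 2) * K + 1 ≤ j → j ≤ (t + 1 - 1) * K →
        W j = fullInfoWeight ((t + 1 - 2) * K) j := by
      intro j hj1 hj2
      have hgen : t * K = (t - 1) * K + K := by rw [← add_one_mul]; congr 1; omega
      rw [show t + 1 - 2 = t - 1 by omega] at hj1 ⊢
      rw [Nat.add_sub_cancel, hgen] at hj2
      simpa [show (t - 1) * K + (j - (t - 1) * K) = j by omega] using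
        ih (j - (t - 1) * K) (by omega) (by omega)
    have hrestr := orthogonalProjectionOnto_mentorSpan (by omega) hprev
      (hmentor (t + 1) k (by omega) hk hkK)
    refine eq_fullInfoWeight_of_restr_eq (by omega) ?_ hdiag hzero habove
    rw [← hrestr]
    ext m
    exact hproj m

end Mentorship

theorem exists_generation_of_one_le {K i : ℕ} (hK : 1 ≤ K) (hi : 1 ≤ i) :
    ∃ t k, 1 ≤ t ∧ 1 ≤ k ∧ k ≤ K ∧ i = (t - 1) * K + k := by
  refine ⟨(i - 1) / K + 1, (i - 1) % K + 1, Nat.le_add_left _ _, Nat.le_add_left _ _,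
    Nat.mod_lt _ hK, ?_⟩
  rw [Nat.add_sub_cancel]
  have := Nat.div_add_mod' (i - 1) K
  omega

theorem tendsto_div_natCast_of_sub_le_of_le {a : ℕ → ℝ} (C : ℝ)
    (h : ∀ᶠ i : ℕ in atTop, (i : ℝ) - C ≤ a i ∧ a i ≤ i) :
    Tendsto (fun i => a i / i) atTop (𝓝 1) := by
  have hlower : Tendsto (fun i : ℕ => 1 - C / i) atTop (𝓝 1) := by
    simpa using (tendsto_const_div_atTop_nhds_zero_nat C).const_sub 1
  refine tendsto_of_tendsto_of_tendsto_of_le_of_le' hlower tendsto_const_nhds ?_ ?_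
  all_goals
    filter_upwards [h, eventually_ge_atTop 1] with i ⟨hlo, hhi⟩ hi
    have hpos : (0 : ℝ) < i := by exact_mod_cast hi
  · rw [one_sub_div hpos.ne']
    exact div_le_div_of_nonneg_right hlo hpos.le
  · exact div_le_one_of_le₀ hhi hpos.le

/-- In the mentorship-augmented maximal generations network with
generation size `K ≥ 1` (each agent of generation `t ≥ 2` observes the log-actions
of all `K` agents of generation `t−1` and additionally the log-signal of one
designated mentor `m(i)` of generation `t−1`), the Bayesian weight vectors
`W_i = e_i + proj_{V_i}(𝟙)` satisfy `W_i = e_i + Σ_{j=1}^{(t−1)K} e_j` for every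
agent `i` in generation `t`; hence `r_i = (t−1)K+1 > i − K` and the aggregative
efficiency is `1`. -/
theorem mentorship_full_efficiency (K : ℕ) (hK : 1 ≤ K)
    (mentor : ℕ → ℕ) (W : ℕ → ℕ → ℝ)
    (hmentor : ∀ t k : ℕ, 2 ≤ t → 1 ≤ k → k ≤ K →
      (t - 2) * K + 1 ≤ mentor ((t - 1) * K + k) ∧
        mentor ((t - 1) * K + k) ≤ (t - 1) * K)
    (hWgen1 : ∀ i : ℕ, 1 ≤ i → i ≤ K → ∀ m : ℕ,
      W i m = if m = i then 1 else 0)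
    (hWrec : ∀ t k : ℕ, 2 ≤ t → 1 ≤ k → k ≤ K →
      (∀ m : Fin ((t - 1) * K + k - 1),
        W ((t - 1) * K + k) (m.1 + 1)
          = (Submodule.orthogonalProjectionOnto (mentorSpan K W mentor t ((t - 1) * K + k))
              (WithLp.toLp 2 (fun _ => (1 : ℝ))) : EuclideanSpace ℝ (Fin ((t - 1) * K + k - 1))) m) ∧
      W ((t - 1) * K + k) ((t - 1) * K + k) = 1 ∧
      W ((t - 1) * K + k) 0 = 0 ∧
      (∀ m : ℕ, (t - 1) * K + k < m → W ((t - 1) * K + k) m = 0)) :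
    (∀ t k : ℕ, 1 ≤ t → 1 ≤ k → k ≤ K → ∀ m : ℕ,
      W ((t - 1) * K + k) m
        = (if m = (t - 1) * K + k then 1 else 0)
          + (if 1 ≤ m ∧ m ≤ (t - 1) * K then 1 else 0)) ∧
    (∀ t k : ℕ, 1 ≤ t → 1 ≤ k → k ≤ K →
      (∑ j ∈ Finset.range ((t - 1) * K + k + 1), W ((t - 1) * K + k) j)
        = (t - 1) * K + 1) ∧
    (∀ t k : ℕ, 1 ≤ t → 1 ≤ k → k ≤ K →
      ((((t - 1) * K + k : ℕ) : ℝ) - K)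
        < ∑ j ∈ Finset.range ((t - 1) * K + k + 1), W ((t - 1) * K + k) j) ∧
    Tendsto (fun i : ℕ => (∑ j ∈ Finset.range (i + 1), W i j) / (i : ℝ))
      atTop (nhds 1) := by
  have hW := weight_eq_fullInfoWeight hmentor hWgen1 hWrec
  have hsum : ∀ t k : ℕ, 1 ≤ t → 1 ≤ k → k ≤ K →
      ∑ j ∈ range ((t - 1) * K + k + 1), W ((t - 1) * K + k) j = (t - 1) * K + 1 := by
    intro t k ht hk hkK
    rw [hW t ht k hk hkK, sum_range_fullInfoWeight (by omega)]
    push_cast [Nat.cast_sub ht]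
    ring
  have hbounds : ∀ t k : ℕ, 1 ≤ t → 1 ≤ k → k ≤ K →
      (((t - 1) * K + k : ℕ) : ℝ) - K < ∑ j ∈ range ((t - 1) * K + k + 1), W ((t - 1) * K + k) j ∧
        ∑ j ∈ range ((t - 1) * K + k + 1), W ((t - 1) * K + k) j ≤ (((t - 1) * K + k : ℕ) : ℝ) := by
    intro t k ht hk hkK
    have hk' : (1 : ℝ) ≤ k ∧ (k : ℝ) ≤ K := ⟨by exact_mod_cast hk, by exact_mod_cast hkK⟩
    rw [hsum t k ht hk hkK]
    push_cast [Nat.cast_sub ht]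
    constructor <;> linarith
  refine ⟨fun t k ht hk hkK => congrFun (hW t ht k hk hkK), hsum,
    fun t k ht hk hkK => (hbounds t k ht hk hkK).1, tendsto_div_natCast_of_sub_le_of_le K ?_⟩
  filter_upwards [eventually_ge_atTop 1] with i hi
  obtain ⟨t, k, ht, hk, hkK, rfl⟩ := exists_generation_of_one_le hK hi
  exact ⟨(hbounds t k ht hk hkK).1.le, (hbounds t k ht hk hkK).2⟩
end
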